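/- arXiv:1807.05135 — 9 statements merged into one kernel-verified Lean document; each statement's English description precedes it below -/
import Mathlib

section
/- If random variables A and B are conditionally independent given R, then for any event W with positive probability, the conditional mutual information I(A; B | R, W) is at most log(1/Pr(W)). -/
open Finset
open scoped Classical

noncomputable def pr {Ω : Type*} [Fintype Ω] (p : Ω → ℝ) (E : Ω → Prop) : ℝ :=
  ∑ ω ∈ Finset.univ.filter (fun ω => E ω), p ω

noncomputable def condMutualInfo {Ω α β ρ : Type*} [Fintype Ω] [Fintype α] [Fintype β]
    [Fintype ρ] (p : Ω → ℝ) (A : Ω → α) (B : Ω → β) (R : Ω → ρ) : ℝ :=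
  ∑ a : α, ∑ b : β, ∑ r : ρ,
    pr p (fun ω => A ω = a ∧ B ω = b ∧ R ω = r) *
      Real.logb 2
        ((pr p (fun ω => A ω = a ∧ B ω = b ∧ R ω = r) * pr p (fun ω => R ω = r)) /
          (pr p (fun ω => A ω = a ∧ R ω = r) * pr p (fun ω => B ω = b ∧ R ω = r)))

/-! Let `q` be `p` conditioned on `W` and write `D` for relative entropy. Since `p` makes `A` and
`B` conditionally independent given `R`, i.e. `p_{ABR} = p_{A|R} p_{BR}`,
`D(q_{ABR} ‖ p_{ABR}) = I_q(A ; B | R) + D(q_{AR} ‖ p_{A|R} q_R) + D(q_{BR} ‖ p_{BR})`,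
and the last two divergences are nonnegative by Gibbs' inequality. Finally `q ≤ p / Pr(W)`
pointwise, so `D(q_{ABR} ‖ p_{ABR}) ≤ log (1 / Pr(W))`. -/

namespace Real

lemma sub_le_mul_log_div {x y : ℝ} (hx : 0 ≤ x) (hy : 0 ≤ y) (hxy : 0 < x → 0 < y) :
    x - y ≤ x * log (x / y) := by
  rcases hx.eq_or_lt with rfl | hx
  · simpa using hy
  · have hy := hxy hx
    calc x - y = x * (1 - (x / y)⁻¹) := by field_simp
      _ ≤ x * log (x / y) := by gcongr; exact one_sub_inv_le_log_of_pos (by positivity)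

lemma log_mul_div_mul_eq_of_mul_eq {x xA xB xR y yA yB yR : ℝ} (hx : 0 < x) (hxA : 0 < xA)
    (hxB : 0 < xB) (hxR : 0 < xR) (hy : 0 < y) (hyA : 0 < yA) (hyB : 0 < yB) (hyR : 0 < yR)
    (h : y * yR = yA * yB) :
    log (x * xR / (xA * xB)) = log (x / y) - log (xA / (yA * xR / yR)) - log (xB / yB) := by
  have hlog := congrArg log h
  rw [log_mul hy.ne' hyR.ne', log_mul hyA.ne' hyB.ne'] at hlog
  rw [log_div (by positivity) (by positivity), log_div hx.ne' hy.ne',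
    log_div hxA.ne' (by positivity), log_div hxB.ne' hyB.ne', log_div (by positivity) hyR.ne',
    log_mul hx.ne' hxR.ne', log_mul hxA.ne' hxB.ne', log_mul hyA.ne' hxR.ne']
  linarith

lemma mul_logb_div_le_mul_logb {b x y c : ℝ} (hb : 1 < b) (hx : 0 ≤ x) (hc : 0 < c)
    (hxy : x ≤ c * y) : x * logb b (x / y) ≤ x * logb b c := by
  rcases hx.eq_or_lt with rfl | hx
  · simp
  · have hy : 0 < y := pos_of_mul_pos_right (hx.trans_le hxy) hc.le
    gcongr
    exact (div_le_iff₀ hy).2 hxy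

end Real

section Pr

variable {Ω : Type*} [Fintype Ω] {p q : Ω → ℝ}

lemma pr_nonneg (hp : ∀ ω, 0 ≤ p ω) (E : Ω → Prop) : 0 ≤ pr p E :=
  sum_nonneg fun ω _ => hp ω

lemma pr_mono (hp : ∀ ω, 0 ≤ p ω) {E F : Ω → Prop} (h : ∀ ω, E ω → F ω) : pr p E ≤ pr p F :=
  sum_le_sum_of_subset_of_nonneg (monotone_filter_right _ fun ω _ => h ω) fun ω _ _ => hp ω

lemma pr_congr (p : Ω → ℝ) {E F : Ω → Prop} (h : ∀ ω, E ω ↔ F ω) : pr p E = pr p F := by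
  simp only [pr, h]

lemma pr_true (p : Ω → ℝ) : pr p (fun _ => True) = ∑ ω, p ω := by
  simp [pr]

lemma sum_pr_fiber {γ : Type*} [Fintype γ] (p : Ω → ℝ) (C : Ω → γ) (E : Ω → Prop) :
    ∑ c, pr p (fun ω => C ω = c ∧ E ω) = pr p E := by
  rw [pr, ← sum_fiberwise (univ.filter E) C p]
  simp only [pr, filter_filter, and_comm]

lemma sum_sum_pr_eq_sum {γ δ : Type*} [Fintype γ] [Fintype δ] (p : Ω → ℝ) (C : Ω → γ)
    (D : Ω → δ) : ∑ c, ∑ d, pr p (fun ω => C ω = c ∧ D ω = d) = ∑ ω, p ω := by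
  rw [sum_comm, ← pr_true p, ← sum_pr_fiber p D]
  simp only [sum_pr_fiber, and_true]

lemma pr_pos_of_pr_pos (hp : ∀ ω, 0 ≤ p ω) (hqp : ∀ ω, p ω = 0 → q ω = 0) {E : Ω → Prop}
    (hq : 0 < pr q E) : 0 < pr p E := by
  obtain ⟨ω, hω, hqω⟩ := exists_ne_zero_of_sum_ne_zero hq.ne'
  exact sum_pos' (fun ω _ => hp ω) ⟨ω, hω, (hp ω).lt_of_ne fun h => hqω (hqp ω h.symm)⟩

lemma pr_conditioned (p : Ω → ℝ) (W : Set Ω) (E : Ω → Prop) :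
    pr (fun ω => if ω ∈ W then p ω / pr p (fun ω' => ω' ∈ W) else 0) E =
      pr p (fun ω => E ω ∧ ω ∈ W) / pr p (fun ω => ω ∈ W) := by
  simp only [pr, sum_filter, sum_div, ite_and]
  refine sum_congr rfl fun ω _ => ?_
  split_ifs <;> simp

end Pr

section Joint

variable {Ω α β ρ : Type*} [Fintype Ω] {A : Ω → α} {B : Ω → β} {R : Ω → ρ} {p q : Ω → ℝ}

lemma pr_triple_mul_log_eq_of_condIndep (hp : ∀ ω, 0 ≤ p ω) (hq : ∀ ω, 0 ≤ q ω)
    (hqp : ∀ ω, p ω = 0 → q ω = 0) (a : α) (b : β) (r : ρ)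
    (hindep : pr p (fun ω => A ω = a ∧ B ω = b ∧ R ω = r) * pr p (fun ω => R ω = r) =
      pr p (fun ω => A ω = a ∧ R ω = r) * pr p (fun ω => B ω = b ∧ R ω = r)) :
    pr q (fun ω => A ω = a ∧ B ω = b ∧ R ω = r) *
        Real.log (pr q (fun ω => A ω = a ∧ B ω = b ∧ R ω = r) * pr q (fun ω => R ω = r) /
          (pr q (fun ω => A ω = a ∧ R ω = r) * pr q (fun ω => B ω = b ∧ R ω = r))) =
      pr q (fun ω => A ω = a ∧ B ω = b ∧ R ω = r) *
          Real.log (pr q (fun ω => A ω = a ∧ B ω = b ∧ R ω = r) /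
            pr p (fun ω => A ω = a ∧ B ω = b ∧ R ω = r)) -
        pr q (fun ω => A ω = a ∧ B ω = b ∧ R ω = r) *
          Real.log (pr q (fun ω => A ω = a ∧ R ω = r) /
            (pr p (fun ω => A ω = a ∧ R ω = r) * pr q (fun ω => R ω = r) /
              pr p (fun ω => R ω = r))) -
        pr q (fun ω => A ω = a ∧ B ω = b ∧ R ω = r) *
          Real.log (pr q (fun ω => B ω = b ∧ R ω = r) / pr p (fun ω => B ω = b ∧ R ω = r)) := by
  obtain hq3 | hq3 := (pr_nonneg hq fun ω => A ω = a ∧ B ω = b ∧ R ω = r).eq_or_lt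
  · simp [← hq3]
  have hp3 := pr_pos_of_pr_pos hp hqp hq3
  rw [Real.log_mul_div_mul_eq_of_mul_eq hq3 (hq3.trans_le (pr_mono hq fun ω h => ⟨h.1, h.2.2⟩))
    (hq3.trans_le (pr_mono hq fun ω h => h.2)) (hq3.trans_le (pr_mono hq fun ω h => h.2.2)) hp3
    (hp3.trans_le (pr_mono hp fun ω h => ⟨h.1, h.2.2⟩)) (hp3.trans_le (pr_mono hp fun ω h => h.2))
    (hp3.trans_le (pr_mono hp fun ω h => h.2.2)) hindep]
  ring

variable [Fintype α] [Fintype β] [Fintype ρ]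

lemma sum_pr_triple_mul_eq_sum_pr_AR (p : Ω → ℝ) (f : α → ρ → ℝ) :
    ∑ a, ∑ b, ∑ r, pr p (fun ω => A ω = a ∧ B ω = b ∧ R ω = r) * f a r =
      ∑ a, ∑ r, pr p (fun ω => A ω = a ∧ R ω = r) * f a r := by
  refine sum_congr rfl fun a _ => ?_
  rw [sum_comm]
  refine sum_congr rfl fun r _ => ?_
  rw [← sum_mul, ← sum_pr_fiber p B (fun ω => A ω = a ∧ R ω = r)]
  congr 1
  exact sum_congr rfl fun b _ => pr_congr p fun ω => by tauto

lemma sum_pr_triple_mul_eq_sum_pr_BR (p : Ω → ℝ) (g : β → ρ → ℝ) :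
    ∑ a, ∑ b, ∑ r, pr p (fun ω => A ω = a ∧ B ω = b ∧ R ω = r) * g b r =
      ∑ b, ∑ r, pr p (fun ω => B ω = b ∧ R ω = r) * g b r := by
  rw [sum_comm]
  refine sum_congr rfl fun b _ => ?_
  rw [sum_comm]
  refine sum_congr rfl fun r _ => ?_
  rw [← sum_mul, sum_pr_fiber p A (fun ω => B ω = b ∧ R ω = r)]

lemma sum_pr_triple (p : Ω → ℝ) :
    ∑ a, ∑ b, ∑ r, pr p (fun ω => A ω = a ∧ B ω = b ∧ R ω = r) = ∑ ω, p ω := by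
  have h := sum_pr_triple_mul_eq_sum_pr_BR (A := A) (B := B) (R := R) p fun _ _ => 1
  simp only [mul_one] at h
  rw [h, sum_sum_pr_eq_sum]

lemma sum_pr_BR_mul_log_div_nonneg (hp : ∀ ω, 0 ≤ p ω) (hq : ∀ ω, 0 ≤ q ω)
    (hqp : ∀ ω, p ω = 0 → q ω = 0) (hsum : ∑ ω, q ω = ∑ ω, p ω) :
    0 ≤ ∑ b, ∑ r, pr q (fun ω => B ω = b ∧ R ω = r) *
      Real.log (pr q (fun ω => B ω = b ∧ R ω = r) / pr p (fun ω => B ω = b ∧ R ω = r)) := by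
  calc (0 : ℝ)
      = ∑ b, ∑ r, (pr q (fun ω => B ω = b ∧ R ω = r) - pr p (fun ω => B ω = b ∧ R ω = r)) := by
        simp only [sum_sub_distrib, sum_sum_pr_eq_sum, hsum, sub_self]
    _ ≤ _ := sum_le_sum fun b _ => sum_le_sum fun r _ =>
        Real.sub_le_mul_log_div (pr_nonneg hq _) (pr_nonneg hp _) (pr_pos_of_pr_pos hp hqp)

lemma sum_pr_AR_mul_log_div_nonneg (hp : ∀ ω, 0 ≤ p ω) (hq : ∀ ω, 0 ≤ q ω)
    (hqp : ∀ ω, p ω = 0 → q ω = 0) :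
    0 ≤ ∑ a, ∑ r, pr q (fun ω => A ω = a ∧ R ω = r) *
      Real.log (pr q (fun ω => A ω = a ∧ R ω = r) /
        (pr p (fun ω => A ω = a ∧ R ω = r) * pr q (fun ω => R ω = r) / pr p (fun ω => R ω = r))) := by
  calc (0 : ℝ)
      = ∑ a, ∑ r, (pr q (fun ω => A ω = a ∧ R ω = r) -
          pr p (fun ω => A ω = a ∧ R ω = r) * pr q (fun ω => R ω = r) / pr p (fun ω => R ω = r)) := by
        rw [sum_comm]
        refine (sum_eq_zero fun r _ => ?_).symm
        rw [sum_sub_distrib, ← sum_div, ← sum_mul, sum_pr_fiber, sum_pr_fiber]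
        obtain hqR | hqR := (pr_nonneg hq fun ω => R ω = r).eq_or_lt
        · simp [← hqR]
        · have hpR := pr_pos_of_pr_pos hp hqp hqR
          field_simp
          ring
    _ ≤ _ := sum_le_sum fun a _ => sum_le_sum fun r _ => by
        refine Real.sub_le_mul_log_div (pr_nonneg hq _)
          (div_nonneg (mul_nonneg (pr_nonneg hp _) (pr_nonneg hq _)) (pr_nonneg hp _)) fun hqA => ?_
        have hpA := pr_pos_of_pr_pos hp hqp hqA
        have hqR := hqA.trans_le (pr_mono hq fun ω h => h.2)
        have hpR := hpA.trans_le (pr_mono hp fun ω h => h.2)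
        positivity

theorem condMutualInfo_le_of_condIndep (hp : ∀ ω, 0 ≤ p ω) (hq : ∀ ω, 0 ≤ q ω)
    (hqp : ∀ ω, p ω = 0 → q ω = 0) (hsum : ∑ ω, q ω = ∑ ω, p ω)
    (hindep : ∀ a b r,
      pr p (fun ω => A ω = a ∧ B ω = b ∧ R ω = r) * pr p (fun ω => R ω = r) =
        pr p (fun ω => A ω = a ∧ R ω = r) * pr p (fun ω => B ω = b ∧ R ω = r)) :
    condMutualInfo q A B R ≤
      ∑ a, ∑ b, ∑ r, pr q (fun ω => A ω = a ∧ B ω = b ∧ R ω = r) *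
        Real.logb 2 (pr q (fun ω => A ω = a ∧ B ω = b ∧ R ω = r) /
          pr p (fun ω => A ω = a ∧ B ω = b ∧ R ω = r)) := by
  simp only [condMutualInfo, Real.logb, ← mul_div_assoc, ← sum_div]
  gcongr ?_ / _
  simp only [pr_triple_mul_log_eq_of_condIndep hp hq hqp _ _ _ (hindep _ _ _), sum_sub_distrib,
    sum_pr_triple_mul_eq_sum_pr_AR, sum_pr_triple_mul_eq_sum_pr_BR]
  linarith [sum_pr_AR_mul_log_div_nonneg (A := A) (R := R) hp hq hqp,
    sum_pr_BR_mul_log_div_nonneg (B := B) (R := R) hp hq hqp hsum]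

end Joint

/-- If `A` and `B` are conditionally independent given `R`, then for any event `W` with
positive probability, `I(A ; B | R, W) ≤ log(1 / Pr(W))`, where the mutual information is
computed under the measure conditioned on `W`. -/
theorem condMutualInfo_cond_event_le {Ω α β ρ : Type*} [Fintype Ω] [Fintype α] [Fintype β]
    [Fintype ρ] (p : Ω → ℝ) (hp0 : ∀ ω, 0 ≤ p ω) (hp1 : ∑ ω, p ω = 1)
    (A : Ω → α) (B : Ω → β) (R : Ω → ρ) (W : Set Ω)
    (hW : 0 < pr p (fun ω => ω ∈ W))
    (hindep : ∀ (a : α) (b : β) (r : ρ),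
      pr p (fun ω => A ω = a ∧ B ω = b ∧ R ω = r) * pr p (fun ω => R ω = r) =
        pr p (fun ω => A ω = a ∧ R ω = r) * pr p (fun ω => B ω = b ∧ R ω = r)) :
    condMutualInfo (fun ω => if ω ∈ W then p ω / pr p (fun ω' => ω' ∈ W) else 0) A B R ≤
      Real.logb 2 (1 / pr p (fun ω => ω ∈ W)) := by
  have hcond := pr_conditioned p W
  set pW := pr p (fun ω => ω ∈ W)
  set q : Ω → ℝ := fun ω => if ω ∈ W then p ω / pW else 0
  have hq0 : ∀ ω, 0 ≤ q ω := fun ω => by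
    dsimp only [q]; split_ifs
    exacts [div_nonneg (hp0 ω) hW.le, le_rfl]
  have hqp : ∀ ω, p ω = 0 → q ω = 0 := fun ω h => by simp [q, h]
  have hq1 : ∑ ω, q ω = 1 := by
    rw [← pr_true, hcond]
    simp only [true_and]
    exact div_self hW.ne'
  calc condMutualInfo q A B R
      ≤ ∑ a, ∑ b, ∑ r, pr q (fun ω => A ω = a ∧ B ω = b ∧ R ω = r) *
          Real.logb 2 (pr q (fun ω => A ω = a ∧ B ω = b ∧ R ω = r) /
            pr p (fun ω => A ω = a ∧ B ω = b ∧ R ω = r)) :=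
        condMutualInfo_le_of_condIndep hp0 hq0 hqp (hq1.trans hp1.symm) hindep
    _ ≤ ∑ a, ∑ b, ∑ r, pr q (fun ω => A ω = a ∧ B ω = b ∧ R ω = r) * Real.logb 2 (1 / pW) :=
        sum_le_sum fun a _ => sum_le_sum fun b _ => sum_le_sum fun r _ =>
          Real.mul_logb_div_le_mul_logb one_lt_two (pr_nonneg hq0 _) (by positivity) <| by
            rw [hcond, one_div_mul_eq_div]
            exact div_le_div_of_nonneg_right (pr_mono hp0 fun ω h => h.1) hW.le
    _ = Real.logb 2 (1 / pW) := by
        simp only [← sum_mul, sum_pr_triple, hq1, one_mul]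
end

section
/- For real α with 0 < α ≤ 1, the product over integers j with 1 ≤ j ≤ 1/α of 1/(1 − (1−α)^j) is at most (3e)^{1/α}. -/
/-!
From `1 - α ≤ e^{-α}` and `1 + t ≤ e^t` we get `(1 - α)^j ≤ e^{-αj} ≤ 1/(1 + αj) ≤ 1 - αj/3`
for `αj ≤ 1`, so each factor is at most `3/(αj)` and the product is at most `(3/α)^N / N!`
with `N = ⌊1/α⌋`. Since `x^N / N! ≤ e^x` and `N ≤ x` for `x = 1/α`, this is at most `3^x e^x`.
-/

open Finset Real Nat

lemma one_sub_pow_le_exp_neg_mul {a : ℝ} (ha : a ≤ 1) (n : ℕ) :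
    (1 - a) ^ n ≤ exp (-(n * a)) := by
  calc (1 - a) ^ n ≤ exp (-a) ^ n := pow_le_pow_left₀ (by linarith) (one_sub_le_exp_neg a) n
    _ = exp (-(n * a)) := by rw [← exp_nat_mul, mul_neg]

lemma exp_neg_le_one_sub_div_three {t : ℝ} (ht0 : 0 ≤ t) (ht2 : t ≤ 2) :
    exp (-t) ≤ 1 - t / 3 := by
  calc exp (-t) ≤ (1 + t)⁻¹ := by
        rw [exp_neg]
        exact inv_anti₀ (by positivity) (by linarith [add_one_le_exp t])
    _ ≤ 1 - t / 3 := by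
        rw [inv_le_iff_one_le_mul₀ (by positivity)]
        nlinarith

lemma one_sub_pow_le_one_sub_mul_div_three {a : ℝ} (ha0 : 0 ≤ a) (ha1 : a ≤ 1) {n : ℕ}
    (hn : n * a ≤ 2) : (1 - a) ^ n ≤ 1 - n * a / 3 :=
  (one_sub_pow_le_exp_neg_mul ha1 n).trans
    (exp_neg_le_one_sub_div_three (by positivity) hn)

lemma one_div_one_sub_one_sub_pow_le {a : ℝ} (ha0 : 0 < a) (ha1 : a ≤ 1) {n : ℕ} (hn0 : 0 < n)
    (hn : n * a ≤ 2) : 1 / (1 - (1 - a) ^ n) ≤ 3 / (n * a) := by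
  have hpow := one_sub_pow_le_one_sub_mul_div_three ha0.le ha1 hn
  have hna : 0 < n * a := by positivity
  rw [div_le_div_iff₀ (by linarith) hna]
  linarith

lemma prod_Icc_div_natCast (c : ℝ) (N : ℕ) : ∏ j ∈ Icc 1 N, c / j = c ^ N / N ! := by
  rw [prod_div_distrib, prod_const, card_Icc, Nat.add_sub_cancel, ← Nat.cast_prod,
    ← Ico_add_one_right_eq_Icc, prod_Ico_id_eq_factorial]

lemma mul_pow_div_factorial_le_rpow {c x : ℝ} (hc : 1 ≤ c) (hx : 0 ≤ x) {N : ℕ}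
    (hN : (N : ℝ) ≤ x) : (c * x) ^ N / N ! ≤ (c * exp 1) ^ x := by
  rw [mul_rpow (by linarith) (exp_pos 1).le, exp_one_rpow, mul_pow, mul_div_assoc]
  gcongr
  · rw [← rpow_natCast]
    exact rpow_le_rpow_of_exponent_le hc hN
  · exact pow_div_factorial_le_exp x hx N

/-- For real `0 < α ≤ 1`, the product over integers `1 ≤ j ≤ 1/α` of `1/(1 − (1−α)^j)`
is at most `(3e)^{1/α}`. -/
theorem prod_small_j_le (α : ℝ) (hα0 : 0 < α) (hα1 : α ≤ 1) :
    ∏ j ∈ Finset.Icc 1 ⌊1 / α⌋₊, 1 / (1 - (1 - α) ^ j) ≤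
      (3 * Real.exp 1) ^ ((1 : ℝ) / α) := by
  have hfactor : ∀ j ∈ Icc 1 ⌊1 / α⌋₊, 1 / (1 - (1 - α) ^ j) ≤ 3 / α / j := by
    intro j hj
    obtain ⟨hj1, hjN⟩ := mem_Icc.mp hj
    have hjα : (j : ℝ) * α ≤ 1 := by
      rw [Nat.le_floor_iff (by positivity), le_div_iff₀ hα0] at hjN
      exact hjN
    rw [div_div, mul_comm α]
    exact one_div_one_sub_one_sub_pow_le hα0 hα1 hj1 (by linarith)
  calc ∏ j ∈ Icc 1 ⌊1 / α⌋₊, 1 / (1 - (1 - α) ^ j)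
      ≤ ∏ j ∈ Icc 1 ⌊1 / α⌋₊, 3 / α / j := by
        refine prod_le_prod (fun j hj => ?_) hfactor
        have : (1 - α) ^ j < 1 :=
          pow_lt_one₀ (by linarith) (by linarith) (Nat.one_le_iff_ne_zero.mp (mem_Icc.mp hj).1)
        exact one_div_nonneg.mpr (by linarith)
    _ = (3 * (1 / α)) ^ ⌊1 / α⌋₊ / ⌊1 / α⌋₊ ! := by rw [prod_Icc_div_natCast, mul_one_div]
    _ ≤ (3 * exp 1) ^ (1 / α) :=
        mul_pow_div_factorial_le_rpow (by norm_num) (by positivity) (Nat.floor_le (by positivity))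
end

section
/- For real α with 0 < α < 1, the product over all integers j > 1/α of 1/(1 − (1−α)^j) converges and is at most e^{2/(e·α)}. -/
/-!
Every factor with `j > 1/α` has `(1-α)^j ≤ e^{-α j} < e^{-1} < 1/2`, and on `[0, 1/2]` one has
`1/(1-x) ≤ e^{2x}` because `(1-x)(1+2x) ≥ 1`. So the product is dominated by the exponential of
`2 ∑_{j > 1/α} (1-α)^j`, a geometric tail equal to `2(1-α)^{N}/α` with `N = ⌊1/α⌋ + 1 > 1/α`,
and `(1-α)^N ≤ e^{-1}` once more.
-/

open Real

namespace Real

variable {ι : Type*} {f g : ι → ℝ} {a : ℝ}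

theorem multipliable_and_tprod_le_exp_of_hasSum (hf : ∀ i, 1 ≤ f i) (hfg : ∀ i, f i ≤ exp (g i))
    (hg : HasSum g a) : Multipliable f ∧ ∏' i, f i ≤ exp a := by
  have hf0 : ∀ i, 0 < f i := fun i => one_pos.trans_le (hf i)
  have hlog_le : ∀ i, log (f i) ≤ g i := fun i => (log_le_iff_le_exp (hf0 i)).2 (hfg i)
  have hlog : Summable fun i => log (f i) :=
    hg.summable.of_nonneg_of_le (fun i => log_nonneg (hf i)) hlog_le
  have hprod := hasProd_of_hasSum_log hf0 hlog.hasSum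
  exact ⟨hprod.multipliable, hprod.tprod_eq ▸ exp_le_exp.2 (hasSum_le hlog_le hlog.hasSum hg)⟩

theorem one_div_one_sub_le_exp_two_mul {x : ℝ} (hx0 : 0 ≤ x) (hx : x ≤ 1 / 2) :
    1 / (1 - x) ≤ exp (2 * x) := by
  rw [div_le_iff₀ (by linarith)]
  nlinarith [add_one_le_exp (2 * x)]

theorem one_sub_pow_le_exp_neg_one {α : ℝ} (hα : α ≤ 1) {j : ℕ} (hj : 1 ≤ α * j) :
    (1 - α) ^ j ≤ exp (-1) :=
  calc (1 - α) ^ j ≤ exp (-α) ^ j := pow_le_pow_left₀ (by linarith) (one_sub_le_exp_neg α) j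
    _ = exp (-(α * j)) := by rw [← exp_nat_mul]; ring_nf
    _ ≤ exp (-1) := exp_le_exp.2 (neg_le_neg hj)

end Real

theorem hasSum_ite_lt_pow {r : ℝ} (hr0 : 0 ≤ r) (hr1 : r < 1) (N : ℕ) :
    HasSum (fun j : ℕ => if N < j then r ^ j else 0) (r ^ (N + 1) / (1 - r)) := by
  rw [← hasSum_nat_add_iff' (N + 1), Finset.sum_eq_zero fun j hj => if_neg (by simpa using hj),
    sub_zero]
  have hshift : (fun j => if N < j + (N + 1) then r ^ (j + (N + 1)) else 0) =
      fun j => r ^ (N + 1) * r ^ j := by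
    ext j; rw [if_pos (by omega), pow_add, mul_comm]
  rw [hshift, div_eq_mul_inv]
  exact (hasSum_geometric_of_lt_one hr0 hr1).mul_left _

/-- For real `0 < α < 1`, the product over all integers `j > 1/α` of `1/(1 − (1−α)^j)`
converges and is at most `e^{2/(e·α)}`. The product is encoded as a `tprod` of the
function which is `1/(1 − (1−α)^j)` when `j > 1/α` and `1` otherwise. -/
theorem prod_large_j_le (α : ℝ) (hα0 : 0 < α) (hα1 : α < 1) :
    Multipliable (fun j : ℕ => if 1 / α < (j : ℝ) then 1 / (1 - (1 - α) ^ j) else 1) ∧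
      (∏' j : ℕ, if 1 / α < (j : ℝ) then 1 / (1 - (1 - α) ^ j) else 1) ≤
        Real.exp (2 / (Real.exp 1 * α)) := by
  set N := ⌊1 / α⌋₊
  have hlarge : ∀ j : ℕ, 1 / α < j ↔ N < j := fun j => (Nat.floor_lt (by positivity)).symm
  have hpow : ∀ j : ℕ, 1 / α < j → (1 - α) ^ j ≤ exp (-1) := fun j hj =>
    one_sub_pow_le_exp_neg_one hα1.le (by rw [div_lt_iff₀ hα0] at hj; linarith)
  have hfactor : ∀ j : ℕ, 1 ≤ (if 1 / α < (j : ℝ) then 1 / (1 - (1 - α) ^ j) else 1) ∧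
      (if 1 / α < (j : ℝ) then 1 / (1 - (1 - α) ^ j) else 1) ≤
        exp (2 * if N < j then (1 - α) ^ j else 0) := by
    intro j
    by_cases hj : 1 / α < (j : ℝ)
    · have hhalf := (hpow j hj).trans exp_neg_one_lt_half.le
      have hpos := pow_pos (sub_pos.2 hα1) j
      simp only [hj, (hlarge j).1 hj, if_true]
      exact ⟨one_le_one_div (by linarith) (by linarith),
        one_div_one_sub_le_exp_two_mul hpos.le hhalf⟩
    · simp only [hj, (hlarge j).not.1 hj, if_false, mul_zero, exp_zero, le_refl, and_self]
  have hsum := (hasSum_ite_lt_pow (r := 1 - α) (by linarith) (by linarith) N).mul_left 2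
  rw [sub_sub_cancel] at hsum
  obtain ⟨hmult, hle⟩ := multipliable_and_tprod_le_exp_of_hasSum
    (fun j => (hfactor j).1) (fun j => (hfactor j).2) hsum
  have hN := hpow (N + 1) (by exact_mod_cast Nat.lt_floor_add_one (1 / α))
  refine ⟨hmult, hle.trans (exp_le_exp.2 ?_)⟩
  calc 2 * ((1 - α) ^ (N + 1) / α) ≤ 2 * (exp (-1) / α) := by gcongr
    _ = 2 / (exp 1 * α) := by rw [exp_neg]; field_simp
end

section
/- Suppose a randomized data structure for incremental spanning forest succeeds with probability at least ε > 0 on each labeled tree input (over its internal randomness), and uses S bits of memory. Then S ≥ (n−2)·log n − log(1/ε). -/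
/-!
Prüfer decoding embeds the sequences `Fin (n - 2) → Fin n` into the labeled trees on `Fin n`, so
there are at least `n ^ (n - 2)` of them. For a fixed seed the output is a function of the memory
state, so the trees on which that seed answers correctly reach pairwise distinct states: at most
`2 ^ S` of them. Summing the success probabilities over all trees therefore gives
`ε * n ^ (n - 2) ≤ 2 ^ S`, and the bound follows by taking `logb 2`.
-/

open Finset SimpleGraph
open scoped Classical

namespace SimpleGraph

variable {V : Type*} {G G' : SimpleGraph V} {u a x y : V}

lemma sup_edge_adj_iff_of_ne (hxu : x ≠ u) (hyu : y ≠ u) :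
    (G ⊔ edge u a).Adj x y ↔ G.Adj x y := by
  simp [edge_adj, hxu, hyu]

lemma neighborSet_sup_edge_of_ne (hxu : x ≠ u) (hxa : x ≠ a) :
    (G ⊔ edge u a).neighborSet x = G.neighborSet x := by
  ext w
  simp [edge_adj, hxu, hxa]

lemma neighborSet_sup_edge_of_notMem_support (hu : u ∉ G.support) (hua : u ≠ a) :
    (G ⊔ edge u a).neighborSet u = {a} := by
  ext w
  have hG : ¬ G.Adj u w := fun h => hu h.mem_support_left
  simp only [mem_neighborSet, sup_adj, edge_adj, hG, Set.mem_singleton_iff]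
  grind

lemma eq_of_sup_edge_eq (hG : u ∉ G.support) (hG' : u ∉ G'.support)
    (h : G ⊔ edge u a = G' ⊔ edge u a) : G = G' := by
  ext x y
  by_cases hx : x = u
  · subst hx
    exact iff_of_false (fun h' => hG h'.mem_support_left) (fun h' => hG' h'.mem_support_left)
  by_cases hy : y = u
  · subst hy
    exact iff_of_false (fun h' => hG h'.mem_support_right) (fun h' => hG' h'.mem_support_right)
  rw [← sup_edge_adj_iff_of_ne (a := a) hx hy, h, sup_edge_adj_iff_of_ne hx hy]

end SimpleGraph

section Prufer

variable {α : Type*} [LinearOrder α] {V : Finset α} {l : List α} {a : α} {t : List α}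

def pruferLeaf (l : List α) (V : Finset α) (h : (V \ l.toFinset).Nonempty) : α :=
  (V \ l.toFinset).min' h

/-- Prüfer decoding, meant for `#V = l.length + 2`; the base case `V.sym2` is then the single edge
joining the last two vertices. -/
def pruferDecode : List α → Finset α → SimpleGraph α
  | [], V => fromEdgeSet V.sym2
  | a :: t, V =>
    if h : (V \ (a :: t).toFinset).Nonempty then
      pruferDecode t (V.erase (pruferLeaf (a :: t) V h)) ⊔ edge (pruferLeaf (a :: t) V h) a
    else ⊥

lemma sdiff_toFinset_nonempty (hV : #V = l.length + 2) : (V \ l.toFinset).Nonempty := by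
  have := le_card_sdiff l.toFinset V
  have := l.toFinset_card_le
  rw [← card_pos]
  omega

lemma pruferLeaf_mem (h : (V \ l.toFinset).Nonempty) : pruferLeaf l V h ∈ V :=
  (mem_sdiff.mp (min'_mem _ h)).1

lemma pruferLeaf_notMem (h : (V \ l.toFinset).Nonempty) : pruferLeaf l V h ∉ l :=
  fun hl => (mem_sdiff.mp (min'_mem _ h)).2 (List.mem_toFinset.mpr hl)

lemma pruferLeaf_ne_head (h : (V \ (a :: t).toFinset).Nonempty) : pruferLeaf (a :: t) V h ≠ a :=
  fun ha => pruferLeaf_notMem h (by rw [ha]; exact List.mem_cons_self)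

lemma card_erase_pruferLeaf (hV : #V = (a :: t).length + 2)
    (h : (V \ (a :: t).toFinset).Nonempty) :
    #(V.erase (pruferLeaf (a :: t) V h)) = t.length + 2 := by
  rw [card_erase_of_mem (pruferLeaf_mem h), hV, List.length_cons]
  rfl

lemma mem_erase_pruferLeaf_of_mem_tail (hl : ∀ x ∈ a :: t, x ∈ V)
    (h : (V \ (a :: t).toFinset).Nonempty) : ∀ x ∈ t, x ∈ V.erase (pruferLeaf (a :: t) V h) :=
  fun x hx => mem_erase.mpr ⟨fun hu => pruferLeaf_notMem h (hu ▸ List.mem_cons_of_mem a hx),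
    hl x (List.mem_cons_of_mem a hx)⟩

@[simp]
lemma pruferDecode_nil_adj {x y : α} :
    (pruferDecode [] V).Adj x y ↔ x ∈ V ∧ y ∈ V ∧ x ≠ y := by
  simp [pruferDecode, and_assoc]

lemma pruferDecode_cons (h : (V \ (a :: t).toFinset).Nonempty) :
    pruferDecode (a :: t) V =
      pruferDecode t (V.erase (pruferLeaf (a :: t) V h)) ⊔ edge (pruferLeaf (a :: t) V h) a :=
  dif_pos h

lemma pruferDecode_support_subset (hl : ∀ x ∈ l, x ∈ V) :
    (pruferDecode l V).support ⊆ V := by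
  induction l generalizing V with
  | nil => exact fun x hx => (pruferDecode_nil_adj.mp ((mem_support _).mp hx).choose_spec).1
  | cons a t ih =>
    by_cases h : (V \ (a :: t).toFinset).Nonempty
    · intro x hx
      obtain ⟨y, hxy⟩ := (mem_support _).mp hx
      rw [pruferDecode_cons h, sup_adj, edge_adj] at hxy
      rcases hxy with hxy | ⟨⟨rfl, -⟩ | ⟨rfl, -⟩, -⟩
      · exact mem_of_mem_erase
          (ih (mem_erase_pruferLeaf_of_mem_tail hl h) hxy.mem_support_left)
      · exact pruferLeaf_mem h
      · exact hl x List.mem_cons_self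
    · rw [pruferDecode, dif_neg h]
      simp

lemma pruferLeaf_notMem_support (hl : ∀ x ∈ a :: t, x ∈ V)
    (h : (V \ (a :: t).toFinset).Nonempty) :
    pruferLeaf (a :: t) V h ∉ (pruferDecode t (V.erase (pruferLeaf (a :: t) V h))).support :=
  fun hu => notMem_erase _ V
    (pruferDecode_support_subset (mem_erase_pruferLeaf_of_mem_tail hl h) hu)

lemma pruferDecode_reachable (hV : #V = l.length + 2) (hl : ∀ x ∈ l, x ∈ V) {x y : α}
    (hx : x ∈ V) (hy : y ∈ V) : (pruferDecode l V).Reachable x y := by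
  induction l generalizing V x y with
  | nil =>
    obtain rfl | hxy := eq_or_ne x y
    · rfl
    · exact (pruferDecode_nil_adj.mpr ⟨hx, hy, hxy⟩).reachable
  | cons a t ih =>
    have h := sdiff_toFinset_nonempty hV
    set u := pruferLeaf (a :: t) V h
    have hle : pruferDecode t (V.erase u) ≤ pruferDecode (a :: t) V :=
      pruferDecode_cons h ▸ le_sup_left
    have hua : (pruferDecode (a :: t) V).Adj u a := by
      rw [pruferDecode_cons h]
      exact Or.inr ((edge_adj ..).mpr ⟨Or.inl ⟨rfl, rfl⟩, pruferLeaf_ne_head h⟩)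
    have reach_head : ∀ z ∈ V, (pruferDecode (a :: t) V).Reachable z a := by
      intro z hz
      obtain rfl | hzu := eq_or_ne z u
      · exact hua.reachable
      · exact (ih (card_erase_pruferLeaf hV h) (mem_erase_pruferLeaf_of_mem_tail hl h)
          (mem_erase.mpr ⟨hzu, hz⟩)
          (mem_erase.mpr ⟨(pruferLeaf_ne_head h).symm, hl a List.mem_cons_self⟩)).mono hle
    exact (reach_head x hx).trans (reach_head y hy).symm

lemma isAcyclic_pruferDecode (hV : #V = l.length + 2) (hl : ∀ x ∈ l, x ∈ V) :
    (pruferDecode l V).IsAcyclic := by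
  induction l generalizing V with
  | nil =>
    obtain ⟨x, y, hxy, rfl⟩ := card_eq_two.mp hV
    have hedge : pruferDecode [] {x, y} = ⊥ ⊔ edge x y := by
      ext v w
      simp only [pruferDecode_nil_adj, mem_insert, mem_singleton, bot_sup_eq, edge_adj]
      grind
    rw [hedge]
    exact isAcyclic_bot.sup_edge_of_not_reachable (by rwa [reachable_bot])
  | cons a t ih =>
    have h := sdiff_toFinset_nonempty hV
    rw [pruferDecode_cons h]
    refine (ih (card_erase_pruferLeaf hV h) (mem_erase_pruferLeaf_of_mem_tail hl h)
      ).sup_edge_of_not_reachable fun hr => ?_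
    exact pruferLeaf_notMem_support hl h (mem_support_of_reachable (pruferLeaf_ne_head h) hr)

lemma mem_iff_nontrivial_neighborSet_pruferDecode (hV : #V = l.length + 2)
    (hl : ∀ x ∈ l, x ∈ V) {x : α} (hx : x ∈ V) :
    x ∈ l ↔ ((pruferDecode l V).neighborSet x).Nontrivial := by
  induction l generalizing V x with
  | nil =>
    simp only [List.not_mem_nil, false_iff]
    rintro ⟨y, hy, z, hz, hyz⟩
    obtain ⟨-, hy, hxy⟩ := pruferDecode_nil_adj.mp hy
    obtain ⟨-, hz, hxz⟩ := pruferDecode_nil_adj.mp hz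
    have : 2 < #V := two_lt_card.mpr ⟨x, hx, y, hy, z, hz, hxy, hxz, hyz⟩
    simp at hV
    omega
  | cons a t ih =>
    have h := sdiff_toFinset_nonempty hV
    have hV' := card_erase_pruferLeaf hV h
    have hl' := mem_erase_pruferLeaf_of_mem_tail hl h
    have hua := pruferLeaf_ne_head h
    have hu := pruferLeaf_notMem_support hl h
    have hut : pruferLeaf (a :: t) V h ∉ a :: t := pruferLeaf_notMem h
    set u := pruferLeaf (a :: t) V h
    have haV : a ∈ V.erase u := mem_erase.mpr ⟨hua.symm, hl a List.mem_cons_self⟩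
    rw [pruferDecode_cons h]
    constructor
    · rintro (_ | ⟨_, hxt⟩)
      · obtain ⟨w, hw, hwa⟩ := (V.erase u).exists_mem_ne (by omega) a
        obtain ⟨z, haz⟩ :=
          (pruferDecode_reachable hV' hl' haV hw).nonempty_neighborSet_left hwa.symm
        have hzu : z ≠ u := by
          rintro rfl
          exact hu haz.mem_support_right
        refine ⟨u, Or.inr ?_, z, Or.inl haz, hzu.symm⟩
        exact (edge_adj ..).mpr ⟨Or.inr ⟨rfl, rfl⟩, hua.symm⟩
      · have hxu : x ≠ u := by
          rintro rfl
          exact hut (List.mem_cons_of_mem a hxt)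
        exact ((ih hV' hl' (mem_erase.mpr ⟨hxu, hx⟩)).mp hxt).mono fun _ => Or.inl
    · intro hnt
      by_contra hxl
      obtain rfl | hxu := eq_or_ne x u
      · rw [neighborSet_sup_edge_of_notMem_support hu hua] at hnt
        exact Set.not_nontrivial_singleton hnt
      · have hxa : x ≠ a := fun hxa => hxl (hxa ▸ List.mem_cons_self)
        rw [neighborSet_sup_edge_of_ne hxu hxa, ← ih hV' hl' (mem_erase.mpr ⟨hxu, hx⟩)] at hnt
        exact hxl (List.mem_cons_of_mem a hnt)

lemma eq_of_pruferDecode_eq {l' : List α} (hV : #V = l.length + 2) (hl : ∀ x ∈ l, x ∈ V)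
    (hl' : ∀ x ∈ l', x ∈ V) (hlen : l.length = l'.length)
    (heq : pruferDecode l V = pruferDecode l' V) : l = l' := by
  induction l generalizing l' V with
  | nil => exact (List.length_eq_zero_iff.mp hlen.symm).symm
  | cons a t ih =>
    obtain _ | ⟨a', t'⟩ := l'
    · simp at hlen
    have hV' : #V = (a' :: t').length + 2 := hlen ▸ hV
    have hsame : V \ (a :: t).toFinset = V \ (a' :: t').toFinset := by
      ext x
      simp only [mem_sdiff, List.mem_toFinset, and_congr_right_iff]
      intro hx
      rw [mem_iff_nontrivial_neighborSet_pruferDecode hV hl hx,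
        mem_iff_nontrivial_neighborSet_pruferDecode hV' hl' hx, heq]
    have h := sdiff_toFinset_nonempty hV
    have h' := sdiff_toFinset_nonempty hV'
    have hleaf : pruferLeaf (a :: t) V h = pruferLeaf (a' :: t') V h' := by
      simp only [pruferLeaf, hsame]
    rw [pruferDecode_cons h, pruferDecode_cons h', ← hleaf] at heq
    have hu := pruferLeaf_notMem_support hl h
    have hu' := pruferLeaf_notMem_support hl' h'
    rw [← hleaf] at hu'
    have haa : a = a' := by
      have := congrArg (·.neighborSet (pruferLeaf (a :: t) V h)) heq
      simp only [neighborSet_sup_edge_of_notMem_support hu (pruferLeaf_ne_head h),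
        neighborSet_sup_edge_of_notMem_support hu' (hleaf ▸ pruferLeaf_ne_head h')] at this
      exact Set.singleton_eq_singleton_iff.mp this
    subst haa
    have htail := eq_of_sup_edge_eq hu hu' heq
    rw [ih (card_erase_pruferLeaf hV h) (mem_erase_pruferLeaf_of_mem_tail hl h)
      (hleaf ▸ mem_erase_pruferLeaf_of_mem_tail hl' h') (by simpa using hlen) htail]

end Prufer

section Cayley

variable {α : Type*} [LinearOrder α] [Fintype α]

lemma isTree_pruferDecode_ofFn (hα : 2 ≤ Fintype.card α)
    (f : Fin (Fintype.card α - 2) → α) :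
    (pruferDecode (List.ofFn f) univ).IsTree := by
  have hV : #(univ : Finset α) = (List.ofFn f).length + 2 := by simp; omega
  have hl : ∀ x ∈ List.ofFn f, x ∈ univ := fun x _ => mem_univ x
  have : Nonempty α := Fintype.card_pos_iff.mp (by omega)
  exact ⟨⟨fun x y => pruferDecode_reachable hV hl (mem_univ x) (mem_univ y)⟩,
    isAcyclic_pruferDecode hV hl⟩

lemma pruferDecode_ofFn_injective (hα : 2 ≤ Fintype.card α) :
    Function.Injective fun f : Fin (Fintype.card α - 2) → α =>
      pruferDecode (List.ofFn f) univ :=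
  fun f g hfg => List.ofFn_injective <| eq_of_pruferDecode_eq (by simp; omega)
    (fun x _ => mem_univ x) (fun x _ => mem_univ x) (by simp) hfg

theorem card_pow_le_card_isTree (hα : 2 ≤ Fintype.card α) :
    Fintype.card α ^ (Fintype.card α - 2) ≤ #{G : SimpleGraph α | G.IsTree} := by
  calc Fintype.card α ^ (Fintype.card α - 2)
      = #((univ : Finset (Fin (Fintype.card α - 2) → α)).image
          fun f => pruferDecode (List.ofFn f) univ) := by
        rw [card_image_of_injective _ (pruferDecode_ofFn_injective hα)]
        simp
    _ ≤ #{G : SimpleGraph α | G.IsTree} := card_le_card fun G hG => by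
        obtain ⟨f, -, rfl⟩ := mem_image.mp hG
        simpa using isTree_pruferDecode_ofFn hα f

end Cayley

lemma card_filter_comp_eq_self_le_card {X Y : Type*} [Fintype Y] (f : X → Y) (g : Y → X)
    (T : Finset X) : #{x ∈ T | g (f x) = x} ≤ Fintype.card Y := by
  refine (card_le_card_of_injOn f (fun _ _ => mem_coe.mpr (mem_univ _)) ?_).trans_eq card_univ
  intro x hx y hy hxy
  rw [← (mem_filter.mp hx).2, ← (mem_filter.mp hy).2, hxy]

lemma mul_card_le_card_of_le_sum_filter {Ω X Y : Type*} [Fintype Ω] [Fintype Y]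
    (q : Ω → ℝ) (hq0 : ∀ ω, 0 ≤ q ω) (hq1 : ∑ ω, q ω = 1)
    (f : Ω → X → Y) (g : Ω → Y → X)
    {T : Finset X} {ε : ℝ} (h : ∀ x ∈ T, ε ≤ ∑ ω with g ω (f ω x) = x, q ω) :
    ε * #T ≤ Fintype.card Y := by
  calc ε * #T = ∑ x ∈ T, ε := by rw [sum_const, nsmul_eq_mul, mul_comm]
    _ ≤ ∑ x ∈ T, ∑ ω with g ω (f ω x) = x, q ω := sum_le_sum h
    _ = ∑ ω, #{x ∈ T | g ω (f ω x) = x} * q ω := by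
        simp_rw [sum_filter]
        rw [sum_comm]
        refine sum_congr rfl fun ω _ => ?_
        rw [← sum_filter, sum_const, nsmul_eq_mul]
    _ ≤ ∑ ω, Fintype.card Y * q ω := sum_le_sum fun ω _ =>
        mul_le_mul_of_nonneg_right
          (by exact_mod_cast card_filter_comp_eq_self_le_card _ _ T) (hq0 ω)
    _ = Fintype.card Y := by rw [← mul_sum, hq1, mul_one]

lemma mul_logb_sub_logb_one_div_le {ε x : ℝ} {k S : ℕ} (hε : 0 < ε) (hx : 0 < x)
    (h : ε * x ^ k ≤ 2 ^ S) : k * Real.logb 2 x - Real.logb 2 (1 / ε) ≤ S := by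
  have := Real.logb_le_logb_of_le (b := 2) one_lt_two (by positivity) h
  rw [Real.logb_mul hε.ne' (by positivity), Real.logb_pow, Real.logb_pow,
    Real.logb_self_eq_one one_lt_two, mul_one] at this
  rw [one_div, Real.logb_inv]
  linarith

theorem randomized_incremental_spanning_forest_lb_general (n S : ℕ) (hn : 2 ≤ n)
    (ε : ℝ) (hε : 0 < ε)
    (Seed : Type) [Fintype Seed] (q : Seed → ℝ) (hq0 : ∀ s, 0 ≤ q s) (hq1 : ∑ s, q s = 1)
    (State : Type) [Fintype State] (hcard : Fintype.card State ≤ 2 ^ S)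
    (init : Seed → State) (ins : Seed → State → Sym2 (Fin n) → State)
    (query : Seed → State → SimpleGraph (Fin n))
    (order : SimpleGraph (Fin n) → List (Sym2 (Fin n)))
    (hcorrect : ∀ G : SimpleGraph (Fin n), G.IsTree →
      ε ≤ ∑ s ∈ Finset.univ.filter
            (fun s => query s ((order G).foldl (ins s) (init s)) = G), q s) :
    ((n : ℝ) - 2) * Real.logb 2 n - Real.logb 2 (1 / ε) ≤ S := by
  have hcount := mul_card_le_card_of_le_sum_filter q hq0 hq1
    (fun s G => (order G).foldl (ins s) (init s)) query
    (T := {G : SimpleGraph (Fin n) | G.IsTree}) fun G hG => hcorrect G (mem_filter.mp hG).2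
  have htrees : (n : ℝ) ^ (n - 2) ≤ #{G : SimpleGraph (Fin n) | G.IsTree} := by
    exact_mod_cast Fintype.card_fin n ▸ card_pow_le_card_isTree (α := Fin n) (by simpa using hn)
  have hbound : ε * (n : ℝ) ^ (n - 2) ≤ 2 ^ S := calc
    ε * (n : ℝ) ^ (n - 2) ≤ ε * #{G : SimpleGraph (Fin n) | G.IsTree} := by gcongr
    _ ≤ Fintype.card State := hcount
    _ ≤ 2 ^ S := by exact_mod_cast hcard
  simpa [Nat.cast_sub hn] using mul_logb_sub_logb_one_div_le hε (by positivity) hbound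

/-- A randomized incremental spanning-forest data structure with `S` bits of memory
(state space of size at most `2^S`), whose components may depend on a random seed drawn
from distribution `q`, and which on each labeled tree input (edges fed in a fixed order)
outputs the tree with probability at least `ε > 0` over the seed, must satisfy
`S ≥ (n−2)·log n − log(1/ε)` (base-2 logs). -/
theorem randomized_incremental_spanning_forest_lb (n S : ℕ) (hn : 2 ≤ n)
    (ε : ℝ) (hε : 0 < ε)
    (Seed : Type) [Fintype Seed] (q : Seed → ℝ) (hq0 : ∀ s, 0 ≤ q s) (hq1 : ∑ s, q s = 1)
    (State : Type) [Fintype State] (hcard : Fintype.card State ≤ 2 ^ S)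
    (init : Seed → State) (ins : Seed → State → Sym2 (Fin n) → State)
    (query : Seed → State → SimpleGraph (Fin n))
    (order : SimpleGraph (Fin n) → List (Sym2 (Fin n)))
    (horder : ∀ G : SimpleGraph (Fin n), ∀ e, e ∈ order G ↔ e ∈ G.edgeSet)
    (hcorrect : ∀ G : SimpleGraph (Fin n), G.IsTree →
      ε ≤ ∑ s ∈ Finset.univ.filter
            (fun s => query s ((order G).foldl (ins s) (init s)) = G), q s) :
    ((n : ℝ) - 2) * Real.logb 2 n - Real.logb 2 (1 / ε) ≤ S :=
  randomized_incremental_spanning_forest_lb_general n S hn ε hε Seed q hq0 hq1 State hcard init ins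
    query order hcorrect
end

section
/- Let μ' and μ be joint distributions of a pair (S, T) on finite sets, where for each t the conditional μ[S | T = t] is uniform on a set of size N_t. Then the mutual information of S and T under μ' satisfies I_{μ'}(S; T) ≤ H_{μ'}(S) − E_{t∼μ'[T]} log N_t + E_{t∼μ'[T]} D_KL(μ'[S|T=t] || μ[S|T=t]). -/
/-!
The inequality is in fact an identity, term by term. Write `μ'_S`, `μ'_T`, `μ_T` for the
marginals. Where `μ' (s, t) > 0` also `μ (s, t) > 0`, so uniformity gives
`μ (s, t) / μ_T(t) = 1 / N t`, and then
`log (μ' / (μ'_S μ'_T)) = -log μ'_S - log N_t + log ((μ' / μ'_T) / (μ / μ_T))`.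
Summing this against `μ'` produces the three terms on the right.
-/

open Finset
open scoped Classical

theorem sum_mul_sum_div_sum_mul_of_nonneg {ι : Type*} [Fintype ι] {f : ι → ℝ} (g : ι → ℝ)
    (hf : ∀ i, 0 ≤ f i) :
    (∑ i, f i) * ∑ i, f i / (∑ j, f j) * g i = ∑ i, f i * g i := by
  rw [Finset.mul_sum]
  refine Finset.sum_congr rfl fun i _ => ?_
  have hzero : ∑ j, f j = 0 → f i = 0 := fun h =>
    (Finset.sum_eq_zero_iff_of_nonneg fun j _ => hf j).mp h i (Finset.mem_univ i)
  rw [← mul_assoc, ← mul_div_assoc, mul_div_cancel_left_of_imp hzero]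

theorem Real.logb_div_mul_eq {b x p q n : ℝ} (hx : x ≠ 0) (hp : p ≠ 0) (hq : q ≠ 0)
    (hn : n ≠ 0) :
    Real.logb b (x / (p * q)) = -Real.logb b p - Real.logb b n + Real.logb b (x / q / n⁻¹) := by
  rw [Real.logb_div hx (mul_ne_zero hp hq), Real.logb_mul hp hq,
    Real.logb_div (div_ne_zero hx hq) (inv_ne_zero hn), Real.logb_div hx hq, Real.logb_inv]
  ring

theorem mul_logb_div_marginals_eq {σ τ : Type*} [Fintype σ] [Fintype τ]
    {μ' μ : σ × τ → ℝ} (hμ'0 : ∀ x, 0 ≤ μ' x) (hμ0 : ∀ x, 0 ≤ μ x) {N : τ → ℕ}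
    (hsupp : ∀ s t, 0 < μ' (s, t) → 0 < μ (s, t))
    (hunif : ∀ t s, 0 < μ (s, t) → μ (s, t) * N t = ∑ s', μ (s', t)) (s : σ) (t : τ) :
    μ' (s, t) * Real.logb 2 (μ' (s, t) / ((∑ t', μ' (s, t')) * (∑ s', μ' (s', t)))) =
      -(μ' (s, t) * Real.logb 2 (∑ t', μ' (s, t'))) - μ' (s, t) * Real.logb 2 (N t)
        + μ' (s, t) * Real.logb 2
            ((μ' (s, t) / (∑ s', μ' (s', t))) / (μ (s, t) / (∑ s', μ (s', t)))) := by
  rcases (hμ'0 (s, t)).eq_or_lt with hzero | hpos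
  · simp [← hzero]
  have hμpos := hsupp s t hpos
  have hu := hunif t s hμpos
  have hcond : μ (s, t) / ∑ s', μ (s', t) = (N t : ℝ)⁻¹ := hu ▸ div_mul_cancel_left₀ hμpos.ne' _
  have hN : (N t : ℝ) ≠ 0 := by
    rintro h
    have hle : μ (s, t) ≤ ∑ s', μ (s', t) :=
      Finset.single_le_sum (fun s' _ => hμ0 (s', t)) (Finset.mem_univ s)
    rw [h, mul_zero] at hu
    linarith
  have hS : ∑ t', μ' (s, t') ≠ 0 := (hpos.trans_le
    (Finset.single_le_sum (fun t' _ => hμ'0 (s, t')) (Finset.mem_univ t))).ne'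
  have hT : ∑ s', μ' (s', t) ≠ 0 := (hpos.trans_le
    (Finset.single_le_sum (fun s' _ => hμ'0 (s', t)) (Finset.mem_univ s))).ne'
  rw [hcond, Real.logb_div_mul_eq hpos.ne' hS hT hN]
  ring

theorem mutualInfo_le_of_uniform_conditionals_general {σ τ : Type*} [Fintype σ] [Fintype τ]
    (μ' μ : σ × τ → ℝ)
    (hμ'0 : ∀ x, 0 ≤ μ' x)
    (hμ0 : ∀ x, 0 ≤ μ x)
    (N : τ → ℕ)
    (hsupp : ∀ s t, 0 < μ' (s, t) → 0 < μ (s, t))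
    (hunif : ∀ t s, 0 < μ (s, t) → μ (s, t) * N t = ∑ s', μ (s', t)) :
    (∑ s, ∑ t, μ' (s, t) *
        Real.logb 2 (μ' (s, t) / ((∑ t', μ' (s, t')) * (∑ s', μ' (s', t))))) ≤
      (-∑ s, (∑ t', μ' (s, t')) * Real.logb 2 (∑ t', μ' (s, t')))
        - (∑ t, (∑ s', μ' (s', t)) * Real.logb 2 (N t))
        + ∑ t, (∑ s', μ' (s', t)) *
            (∑ s, (μ' (s, t) / (∑ s', μ' (s', t))) *
              Real.logb 2
                ((μ' (s, t) / (∑ s', μ' (s', t))) / (μ (s, t) / (∑ s', μ (s', t))))) := by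
  refine (Finset.sum_congr rfl fun s _ => Finset.sum_congr rfl fun t _ =>
    mul_logb_div_marginals_eq hμ'0 hμ0 hsupp hunif s t).trans_le (le_of_eq ?_)
  simp only [Finset.sum_add_distrib, Finset.sum_sub_distrib, Finset.sum_neg_distrib]
  congr 1
  · congr 1
    · simp only [Finset.sum_mul]
    · rw [Finset.sum_comm]
      simp only [Finset.sum_mul]
  · rw [Finset.sum_comm]
    exact Finset.sum_congr rfl fun t _ =>
      (sum_mul_sum_div_sum_mul_of_nonneg _ fun s => hμ'0 (s, t)).symm

/-- Let `μ'` and `μ` be joint distributions of a pair `(S, T)` on finite sets, where for each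
`t` the conditional `μ[S | T = t]` is uniform on a set of size `N t`, and the support of
`μ'[S|T=t]` lies within that of `μ[S|T=t]`. Then
`I_{μ'}(S;T) ≤ H_{μ'}(S) − E_{t∼μ'[T]} log N_t + E_{t∼μ'[T]} D_KL(μ'[S|T=t] ‖ μ[S|T=t])`
(base-2 logs). -/
theorem mutualInfo_le_of_uniform_conditionals {σ τ : Type*} [Fintype σ] [Fintype τ]
    (μ' μ : σ × τ → ℝ)
    (hμ'0 : ∀ x, 0 ≤ μ' x) (hμ'1 : ∑ x, μ' x = 1)
    (hμ0 : ∀ x, 0 ≤ μ x) (hμ1 : ∑ x, μ x = 1)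
    (N : τ → ℕ)
    (hsupp : ∀ s t, 0 < μ' (s, t) → 0 < μ (s, t))
    (hcard : ∀ t, (Finset.univ.filter (fun s => 0 < μ (s, t))).card = N t)
    (hunif : ∀ t s, 0 < μ (s, t) → μ (s, t) * N t = ∑ s', μ (s', t)) :
    (∑ s, ∑ t, μ' (s, t) *
        Real.logb 2 (μ' (s, t) / ((∑ t', μ' (s, t')) * (∑ s', μ' (s', t))))) ≤
      (-∑ s, (∑ t', μ' (s, t')) * Real.logb 2 (∑ t', μ' (s, t')))
        - (∑ t, (∑ s', μ' (s', t)) * Real.logb 2 (N t))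
        + ∑ t, (∑ s', μ' (s', t)) *
            (∑ s, (μ' (s, t) / (∑ s', μ' (s', t))) *
              Real.logb 2
                ((μ' (s, t) / (∑ s', μ' (s', t))) / (μ (s, t) / (∑ s', μ (s', t))))) :=
  mutualInfo_le_of_uniform_conditionals_general μ' μ hμ'0 hμ0 N hsupp hunif
end

section
/- Consider the process: fix a set S of size m, set T initially a uniformly random subset of S of size r_{i_0}, and in rounds j = i_0, …, i−1, add to T either a uniformly random subset of S∖T of size r_{j+1} − r_j, or a uniformly random subset of S∖T of size r_{j+1} − r_j conditioned on containing one fixed element x_j ∈ S∖T. Then for every round i and every set T' ⊆ S of size r_i, Pr(T = T') ≤ (1/C(m, r_i)) · ∏_{j=i_0}^{i−1} (m − r_j)/(r_i − r_j). -/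
/-!
Instead of `Pr(T = T')` bound the larger `Pr(T ⊆ Q)` for a fixed `Q` with `|Q| = q ≥ r_i`.
Initially it is `C(q, r_{i0}) / C(m, r_{i0})`. In a round growing `T ⊆ Q` from size `a` to size
`b`, the new set stays inside `Q` with probability `C(q-a, b-a) / C(m-a, b-a)` when the added
elements are unconstrained, and with probability at most `C(q-a-1, b-a-1) / C(m-a-1, b-a-1)`,
which is the former times `(m-a)/(q-a)`, when an element outside `T` is forced. As
`C(q-a, b-a) / C(m-a, b-a) · C(q, a) / C(m, a) = C(q, b) / C(m, b)`, the bound telescopes to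
`C(q, r_i) / C(m, r_i) · ∏ (m - r_j) / (q - r_j)`, and `q = r_i` gives the theorem.
-/

open Finset

/-- One round of the process: from a current set `T` of size `r j` (a subset of `S`),
add a uniformly random subset of `S ∖ T` of size `r(j+1) − r j`, either unconstrained
(when `forced T = none`) or conditioned on containing a fixed element `x ∈ S ∖ T`
(when `forced T = some x`). This maps a distribution `P` on subsets to the distribution
after the round. -/
noncomputable def stepP {V : Type*} [DecidableEq V] (S : Finset V) (rj rj1 : ℕ)
    (forced : Finset V → Option V) (P : Finset V → ℝ) : Finset V → ℝ :=
  fun T' => ∑ T ∈ S.powerset,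
    P T *
      (match forced T with
        | none =>
            if T ⊆ T' ∧ T' ⊆ S ∧ T.card = rj ∧ T'.card = rj1 then
              (1 : ℝ) / ((S.card - rj).choose (rj1 - rj)) else 0
        | some x =>
            if T ⊆ T' ∧ T' ⊆ S ∧ T.card = rj ∧ T'.card = rj1 ∧ x ∈ T' then
              (1 : ℝ) / ((S.card - rj - 1).choose (rj1 - rj - 1)) else 0)

/-- The distribution of the evolving set `T` after `k` rounds, starting at round `i0` from a
uniformly random subset of `S` of size `r i0`. -/
noncomputable def procP {V : Type*} [DecidableEq V] (S : Finset V) (r : ℕ → ℕ) (i0 : ℕ)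
    (forced : ℕ → Finset V → Option V) : ℕ → Finset V → ℝ
  | 0 => fun T => if T ⊆ S ∧ T.card = r i0 then (1 : ℝ) / (S.card.choose (r i0)) else 0
  | (k + 1) =>
      stepP S (r (i0 + k)) (r (i0 + k + 1)) (forced (i0 + k)) (procP S r i0 forced k)

theorem Nat.choose_div_choose_eq_pred {n N d : ℕ} (hd : 0 < d) (hdn : d ≤ n) (hdN : d ≤ N) :
    ((n - 1).choose (d - 1) : ℝ) / (N - 1).choose (d - 1) =
      (n.choose d : ℝ) / N.choose d * ((N : ℝ) / n) := by
  obtain ⟨d, rfl⟩ := Nat.exists_eq_add_one_of_ne_zero hd.ne'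
  obtain ⟨n, rfl⟩ := Nat.exists_eq_add_one_of_ne_zero (by omega : n ≠ 0)
  obtain ⟨N, rfl⟩ := Nat.exists_eq_add_one_of_ne_zero (by omega : N ≠ 0)
  have hchoose (k : ℕ) : ((k + 1).choose (d + 1) : ℝ) = (k + 1) * k.choose d / (d + 1) := by
    rw [eq_div_iff (by positivity)]
    exact_mod_cast (Nat.add_one_mul_choose_eq k d).symm
  have hpos : (0 : ℝ) < N.choose d := by exact_mod_cast Nat.choose_pos (by omega)
  simp only [Nat.add_sub_cancel, hchoose]
  push_cast
  field_simp

theorem Nat.choose_sub_div_mul_choose_div {a b n N : ℕ} (hab : a ≤ b) (hbN : b ≤ N) :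
    ((n - a).choose (b - a) : ℝ) / (N - a).choose (b - a) * (n.choose a / N.choose a) =
      n.choose b / N.choose b := by
  have hn : (n.choose a * (n - a).choose (b - a) : ℝ) = n.choose b * b.choose a := by
    exact_mod_cast (Nat.choose_mul hab).symm
  have hN : (N.choose a * (N - a).choose (b - a) : ℝ) = N.choose b * b.choose a := by
    exact_mod_cast (Nat.choose_mul hab).symm
  have hpos (k : ℕ) (hk : k ≤ N) : (0 : ℝ) < N.choose k := by exact_mod_cast Nat.choose_pos hk
  have hba : (0 : ℝ) < b.choose a := by exact_mod_cast Nat.choose_pos hab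
  have hNa : (0 : ℝ) < (N - a).choose (b - a) := by exact_mod_cast Nat.choose_pos (by omega)
  rw [_root_.div_mul_div_comm, div_eq_div_iff (by positivity [hpos a (by omega)]) (hpos b hbN).ne',
    mul_comm ((n - a).choose (b - a) : ℝ), hn, mul_comm ((N - a).choose (b - a) : ℝ), hN]
  ring

section SubsetGrowth

variable {V : Type*} [DecidableEq V]

theorem card_filter_powerset_le_choose (Q P : Finset V) (b : ℕ) (p : Finset V → Prop)
    [DecidablePred p] (hp : ∀ U, p U → P ⊆ U ∧ #U = b) :
    #{U ∈ Q.powerset | p U} ≤ (#Q - #P).choose (b - #P) := by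
  by_cases hPQ : P ⊆ Q
  · rw [← card_sdiff_of_subset hPQ, ← card_powersetCard]
    refine card_le_card_of_injOn (· \ P) (fun U hU => ?_) (fun U₁ hU₁ U₂ hU₂ h => ?_)
    · simp only [coe_filter, mem_powerset, Set.mem_ofPred_eq] at hU
      obtain ⟨hPU, rfl⟩ := hp U hU.2
      simp [mem_powersetCard, sdiff_subset_sdiff hU.1 le_rfl, card_sdiff_of_subset hPU]
    · simp only [coe_filter, mem_powerset, Set.mem_ofPred_eq] at hU₁ hU₂
      rw [← sdiff_union_of_subset (hp U₁ hU₁.2).1, ← sdiff_union_of_subset (hp U₂ hU₂.2).1]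
      exact congrArg (· ∪ P) h
  · rw [filter_false_of_mem fun U hU hpU => hPQ ((hp U hpU).1.trans (mem_powerset.mp hU))]
    simp

theorem sum_powerset_ite_le_choose_mul (Q P : Finset V) (b : ℕ) (p : Finset V → Prop)
    [DecidablePred p] (hp : ∀ U, p U → P ⊆ U ∧ #U = b) {c : ℝ} (hc : 0 ≤ c) :
    ∑ U ∈ Q.powerset, (if p U then c else 0) ≤ (#Q - #P).choose (b - #P) * c := by
  rw [← sum_filter, sum_const, nsmul_eq_mul]
  gcongr
  exact_mod_cast card_filter_powerset_le_choose Q P b p hp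

noncomputable def stepProb (S : Finset V) (a b : ℕ) (o : Option V) (T U : Finset V) : ℝ :=
  match o with
  | none =>
      if T ⊆ U ∧ U ⊆ S ∧ T.card = a ∧ U.card = b then
        (1 : ℝ) / ((S.card - a).choose (b - a)) else 0
  | some x =>
      if T ⊆ U ∧ U ⊆ S ∧ T.card = a ∧ U.card = b ∧ x ∈ U then
        (1 : ℝ) / ((S.card - a - 1).choose (b - a - 1)) else 0

theorem stepP_eq_sum (S : Finset V) (a b : ℕ) (forced : Finset V → Option V)
    (P : Finset V → ℝ) (U : Finset V) :
    stepP S a b forced P U = ∑ T ∈ S.powerset, P T * stepProb S a b (forced T) T U :=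
  rfl

theorem stepProb_nonneg (S : Finset V) (a b : ℕ) (o : Option V) (T U : Finset V) :
    0 ≤ stepProb S a b o T U := by
  cases o <;> dsimp only [stepProb] <;> split_ifs <;> positivity

theorem stepProb_eq_zero {S : Finset V} {a b : ℕ} {o : Option V} {T U : Finset V}
    (h : ¬(T ⊆ U ∧ #T = a)) : stepProb S a b o T U = 0 := by
  cases o <;> dsimp only [stepProb] <;> rw [if_neg] <;> tauto

theorem sum_powerset_stepProb_le {S Q T : Finset V} {a b : ℕ} {o : Option V}
    (hab : a < b) (hbQ : b ≤ #Q) (hQS : #Q ≤ #S) (hT : #T = a) (ho : ∀ x, o = some x → x ∉ T) :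
    ∑ U ∈ Q.powerset, stepProb S a b o T U ≤
      (#Q - a).choose (b - a) / (#S - a).choose (b - a) * ((#S - a : ℕ) / (#Q - a : ℕ) : ℝ) := by
  cases o with
  | none =>
    calc ∑ U ∈ Q.powerset, stepProb S a b none T U
        ≤ (#Q - #T).choose (b - #T) * (1 / (#S - a).choose (b - a) : ℝ) :=
          sum_powerset_ite_le_choose_mul Q T b _ (fun U h => ⟨h.1, h.2.2.2⟩) (by positivity)
      _ = (#Q - a).choose (b - a) / (#S - a).choose (b - a) := by rw [hT, mul_one_div]
      _ ≤ _ := by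
          refine le_mul_of_one_le_right (by positivity) ((one_le_div ?_).mpr ?_)
          all_goals norm_cast; omega
  | some x =>
    have hxT : x ∉ T := ho x rfl
    calc ∑ U ∈ Q.powerset, stepProb S a b (some x) T U
        ≤ (#Q - #(insert x T)).choose (b - #(insert x T)) *
            (1 / (#S - a - 1).choose (b - a - 1) : ℝ) :=
          sum_powerset_ite_le_choose_mul Q (insert x T) b _
            (fun U h => ⟨insert_subset h.2.2.2.2 h.1, h.2.2.2.1⟩) (by positivity)
      _ = (#Q - a - 1).choose (b - a - 1) / (#S - a - 1).choose (b - a - 1) := by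
          rw [card_insert_of_notMem hxT, hT, mul_one_div]; simp only [Nat.sub_sub]
      _ = _ := Nat.choose_div_choose_eq_pred (by omega) (by omega) (by omega)

theorem sum_powerset_stepP_le {S Q : Finset V} {a b : ℕ} (hab : a < b) (hbQ : b ≤ #Q)
    (hQS : #Q ≤ #S) {forced : Finset V → Option V} (hforced : ∀ T x, forced T = some x → x ∉ T)
    {P : Finset V → ℝ} (hP : ∀ T, 0 ≤ P T) :
    ∑ U ∈ Q.powerset, stepP S a b forced P U ≤
      (#Q - a).choose (b - a) / (#S - a).choose (b - a) * ((#S - a : ℕ) / (#Q - a : ℕ) : ℝ) *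
        ∑ T ∈ Q.powerset, P T := by
  set ρ : ℝ := (#Q - a).choose (b - a) / (#S - a).choose (b - a) * ((#S - a : ℕ) / (#Q - a : ℕ))
  have hrow (T : Finset V) :
      ∑ U ∈ Q.powerset, stepProb S a b (forced T) T U ≤ if T ⊆ Q ∧ #T = a then ρ else 0 := by
    split_ifs with hT
    · exact sum_powerset_stepProb_le hab hbQ hQS hT.2 (hforced T)
    · refine (sum_eq_zero fun U hU => stepProb_eq_zero fun hTU => hT ?_).le
      exact ⟨hTU.1.trans (mem_powerset.mp hU), hTU.2⟩
  calc ∑ U ∈ Q.powerset, stepP S a b forced P U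
      = ∑ T ∈ S.powerset, P T * ∑ U ∈ Q.powerset, stepProb S a b (forced T) T U := by
        simp only [stepP_eq_sum, mul_sum]
        exact sum_comm
    _ ≤ ∑ T ∈ S.powerset, P T * if T ⊆ Q ∧ #T = a then ρ else 0 := by
        gcongr with T
        · exact hP T
        · exact hrow T
    _ = ρ * ∑ T ∈ S.powerset with T ⊆ Q ∧ #T = a, P T := by
        rw [sum_filter, mul_sum]
        exact sum_congr rfl fun T _ => by split_ifs <;> ring
    _ ≤ ρ * ∑ T ∈ Q.powerset, P T := by
        gcongr ρ * ?_
        refine sum_le_sum_of_subset_of_nonneg (fun T hT => ?_) fun T _ _ => hP T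
        exact mem_powerset.mpr (mem_filter.mp hT).2.1

theorem procP_nonneg (S : Finset V) (r : ℕ → ℕ) (i0 : ℕ) (forced : ℕ → Finset V → Option V) :
    ∀ k T, 0 ≤ procP S r i0 forced k T
  | 0, T => by
      dsimp only [procP]
      split_ifs <;> positivity
  | k + 1, T => by
      rw [procP, stepP_eq_sum]
      exact sum_nonneg fun U _ => mul_nonneg (procP_nonneg S r i0 forced k U) (stepProb_nonneg ..)

theorem sum_powerset_procP_le {S Q : Finset V} (hQS : #Q ≤ #S) {r : ℕ → ℕ} (hr : StrictMono r)
    (i0 : ℕ) {forced : ℕ → Finset V → Option V}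
    (hforced : ∀ j T x, forced j T = some x → x ∉ T) :
    ∀ k, r (i0 + k) ≤ #Q →
      ∑ U ∈ Q.powerset, procP S r i0 forced k U ≤
        (#Q).choose (r (i0 + k)) / (#S).choose (r (i0 + k)) *
          ∏ j ∈ Ico i0 (i0 + k), ((#S : ℝ) - r j) / (#Q - r j)
  | 0, _ => by
      simpa [procP, div_eq_mul_inv] using sum_powerset_ite_le_choose_mul Q ∅ (r i0) _
        (fun U h => ⟨empty_subset U, h.2⟩) (c := 1 / (#S).choose (r i0)) (by positivity)
  | k + 1, hk => by
      have hstep : r (i0 + k) < r (i0 + k + 1) := hr (Nat.lt_succ_self _)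
      have hkQ : r (i0 + k) < #Q := hstep.trans_le hk
      refine (sum_powerset_stepP_le hstep hk hQS (hforced _)
        (procP_nonneg S r i0 forced k)).trans ?_
      refine (mul_le_mul_of_nonneg_left (sum_powerset_procP_le hQS hr i0 hforced k hkQ.le)
        (by positivity)).trans_eq ?_
      rw [← add_assoc, prod_Ico_succ_top (Nat.le_add_right i0 k),
        ← Nat.choose_sub_div_mul_choose_div hstep.le (hk.trans hQS),
        Nat.cast_sub hkQ.le, Nat.cast_sub (hkQ.le.trans hQS)]
      ring

end SubsetGrowth

theorem procP_le_general {V : Type*} [DecidableEq V] (S : Finset V) (m : ℕ) (hm : S.card = m)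
    (r : ℕ → ℕ) (hr : StrictMono r) (i0 i : ℕ) (hi : i0 ≤ i) (hri : r i ≤ m)
    (forced : ℕ → Finset V → Option V)
    (hforced : ∀ j T x, forced j T = some x → x ∈ S \ T)
    (T' : Finset V) (hT' : T'.card = r i) :
    procP S r i0 forced (i - i0) T' ≤
      (1 / (m.choose (r i) : ℝ)) *
        ∏ j ∈ Finset.Ico i0 i, ((m : ℝ) - r j) / ((r i : ℝ) - r j) := by
  subst hm
  have hbound := sum_powerset_procP_le (Q := T') (hT' ▸ hri) hr i0
    (fun j T x h => (mem_sdiff.mp (hforced j T x h)).2) (i - i0)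
    (by rw [Nat.add_sub_cancel' hi, hT'])
  rw [Nat.add_sub_cancel' hi, hT', Nat.choose_self, Nat.cast_one] at hbound
  calc procP S r i0 forced (i - i0) T'
      ≤ ∑ U ∈ T'.powerset, procP S r i0 forced (i - i0) U :=
        single_le_sum (fun U _ => procP_nonneg S r i0 forced _ U) (mem_powerset_self T')
    _ ≤ _ := hbound

/-- For every round `i ≥ i0` and every `T' ⊆ S` of size `r i`,
`Pr(T = T') ≤ (1/C(m, r i)) · ∏_{j=i0}^{i−1} (m − r j)/(r i − r j)`, where `m = |S|`. -/
theorem procP_le {V : Type*} [DecidableEq V] (S : Finset V) (m : ℕ) (hm : S.card = m)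
    (r : ℕ → ℕ) (hr : StrictMono r) (i0 i : ℕ) (hi : i0 ≤ i) (hri : r i ≤ m)
    (forced : ℕ → Finset V → Option V)
    (hforced : ∀ j T x, forced j T = some x → x ∈ S \ T)
    (T' : Finset V) (hT'S : T' ⊆ S) (hT' : T'.card = r i) :
    procP S r i0 forced (i - i0) T' ≤
      (1 / (m.choose (r i) : ℝ)) *
        ∏ j ∈ Finset.Ico i0 i, ((m : ℝ) - r j) / ((r i : ℝ) - r j) :=
  procP_le_general S m hm r hr i0 i hi hri forced hforced T' hT'
end

section
/- Let each round independently be 'bad' with probability at most 3δ'. With R = ⌈log_{3/2} n⌉ + max{⌈log_{3/2} n⌉, log(2/δ)/log(1/(6eδ'))} rounds and δ' ≤ 1/(6e), the probability of having fewer than ⌈log_{3/2} n⌉ good rounds is at most δ/2. -/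
/-!
If fewer than `L` of the `R` rounds are good, then some `k = R - L` rounds are all bad. A union
bound over the `R.choose k` such sets of rounds together with independence bounds the probability
by `R.choose k * (3δ')^k`; since `R ≤ 2k`, `R.choose k ≤ 2^R ≤ 4^k`, so it is at most
`(12δ')^k ≤ (6eδ')^k`, and the lower bound on `k` makes this at most `δ/2`.
-/

open Finset
open scoped Classical

section

variable {Ω ι : Type*} [Fintype Ω] [Fintype ι] {p : Ω → ℝ} (A : ι → Finset Ω)

theorem sum_filter_card_mem_ge_le_sum_powersetCard (hp : ∀ ω, 0 ≤ p ω) (k : ℕ) :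
    ∑ ω ∈ univ.filter (fun ω => k ≤ (univ.filter fun i => ω ∈ A i).card), p ω ≤
      ∑ T ∈ powersetCard k univ, ∑ ω ∈ univ.filter (fun ω => ∀ i ∈ T, ω ∈ A i), p ω := by
  simp_rw [sum_filter (s := univ) (fun ω => ∀ i ∈ _, ω ∈ A i)]
  rw [sum_comm]
  refine (sum_le_sum fun ω hω => ?_).trans <| sum_le_sum_of_subset_of_nonneg (subset_univ _)
    fun ω _ _ => sum_nonneg fun T _ => ite_nonneg (hp ω) le_rfl
  obtain ⟨T, hT, hTcard⟩ := exists_subset_card_eq (mem_filter.mp hω).2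
  have hTall : ∀ i ∈ T, ω ∈ A i := fun i hi => (mem_filter.mp (hT hi)).2
  calc p ω = if ∀ i ∈ T, ω ∈ A i then p ω else 0 := (if_pos hTall).symm
    _ ≤ _ := single_le_sum (f := fun T => if ∀ i ∈ T, ω ∈ A i then p ω else 0)
        (fun _ _ => ite_nonneg (hp ω) le_rfl) (mem_powersetCard_univ.mpr hTcard)

variable {q : ℝ}

theorem sum_filter_forall_mem_le_pow (hp : ∀ ω, 0 ≤ p ω)
    (hindep : ∀ T : Finset ι,
      (∑ ω ∈ univ.filter (fun ω => ∀ i ∈ T, ω ∈ A i), p ω) = ∏ i ∈ T, ∑ ω ∈ A i, p ω)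
    (hA : ∀ i, (∑ ω ∈ A i, p ω) ≤ q) (T : Finset ι) :
    ∑ ω ∈ univ.filter (fun ω => ∀ i ∈ T, ω ∈ A i), p ω ≤ q ^ T.card := by
  rw [hindep, ← prod_const]
  exact prod_le_prod (fun i _ => sum_nonneg fun ω _ => hp ω) fun i _ => hA i

theorem sum_filter_card_mem_ge_le_choose_mul_pow (hp : ∀ ω, 0 ≤ p ω)
    (hindep : ∀ T : Finset ι,
      (∑ ω ∈ univ.filter (fun ω => ∀ i ∈ T, ω ∈ A i), p ω) = ∏ i ∈ T, ∑ ω ∈ A i, p ω)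
    (hA : ∀ i, (∑ ω ∈ A i, p ω) ≤ q) (k : ℕ) :
    ∑ ω ∈ univ.filter (fun ω => k ≤ (univ.filter fun i => ω ∈ A i).card), p ω ≤
      (Fintype.card ι).choose k * q ^ k := by
  calc _ ≤ ∑ T ∈ powersetCard k univ, q ^ k :=
        (sum_filter_card_mem_ge_le_sum_powersetCard A hp k).trans <| sum_le_sum fun T hT => by
          simpa [(mem_powersetCard.mp hT).2] using sum_filter_forall_mem_le_pow A hp hindep hA T
    _ = _ := by rw [sum_const, card_powersetCard, card_univ, nsmul_eq_mul]

theorem filter_card_notMem_lt_subset (L : ℕ) :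
    univ.filter (fun ω => (univ.filter fun i => ω ∉ A i).card < L) ⊆
      univ.filter (fun ω => Fintype.card ι - L ≤ (univ.filter fun i => ω ∈ A i).card) := by
  intro ω
  simp only [mem_filter, mem_univ, true_and]
  have := card_filter_add_card_filter_not (s := univ) (fun i => ω ∈ A i)
  rw [card_univ] at this
  omega

end

theorem Nat.choose_le_four_pow {n k : ℕ} (h : n ≤ 2 * k) : n.choose k ≤ 4 ^ k :=
  (Nat.choose_le_two_pow n k).trans <| by
    rw [show 4 ^ k = 2 ^ (2 * k) by rw [pow_mul]; norm_num]
    exact Nat.pow_le_pow_right two_pos h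

theorem Real.pow_le_of_log_inv_le {x y : ℝ} (hx : 0 < x) (hy : 0 < y) {k : ℕ}
    (h : Real.log (1 / y) ≤ k * Real.log (1 / x)) : x ^ k ≤ y := by
  rw [one_div, Real.log_inv, one_div, Real.log_inv] at h
  rw [← Real.log_le_log_iff (by positivity) hy, Real.log_pow]
  linarith

theorem few_good_rounds_prob_le_general {Ω : Type*} [Fintype Ω]
    (p : Ω → ℝ) (hp0 : ∀ ω, 0 ≤ p ω)
    (n : ℕ) (δ δ' : ℝ) (hδ0 : 0 < δ)
    (hδ'0 : 0 < δ')
    (R : ℕ) (Bad : Fin R → Finset Ω)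
    (hindep : ∀ T : Finset (Fin R),
      (∑ ω ∈ Finset.univ.filter (fun ω => ∀ i ∈ T, ω ∈ Bad i), p ω) =
        ∏ i ∈ T, ∑ ω ∈ Bad i, p ω)
    (hbad : ∀ i, (∑ ω ∈ Bad i, p ω) ≤ 3 * δ')
    (hR1 : (⌈Real.logb (3 / 2) n⌉₊ : ℝ) ≤ (R : ℝ) - ⌈Real.logb (3 / 2) n⌉₊)
    (hR2 : Real.log (2 / δ) ≤
      ((R : ℝ) - ⌈Real.logb (3 / 2) n⌉₊) * Real.log (1 / (6 * Real.exp 1 * δ'))) :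
    (∑ ω ∈ Finset.univ.filter
        (fun ω =>
          (Finset.univ.filter (fun i : Fin R => ω ∉ Bad i)).card <
            ⌈Real.logb (3 / 2) n⌉₊), p ω) ≤ δ / 2 := by
  set L := ⌈Real.logb (3 / 2) n⌉₊
  have hLR : 2 * L ≤ R := by exact_mod_cast (by linarith : (2 * L : ℝ) ≤ R)
  have hk : ((R - L : ℕ) : ℝ) = R - L := by rw [Nat.cast_sub (by omega)]
  have he : (2 : ℝ) ≤ Real.exp 1 := by linarith [Real.add_one_le_exp (1 : ℝ)]
  calc _ ≤ ∑ ω ∈ univ.filter (fun ω => R - L ≤ (univ.filter fun i => ω ∈ Bad i).card), p ω :=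
        sum_le_sum_of_subset_of_nonneg (by simpa using filter_card_notMem_lt_subset Bad L)
          fun ω _ _ => hp0 ω
    _ ≤ R.choose (R - L) * (3 * δ') ^ (R - L) := by
        -- `convert` bridges the decidability instances: over `Fin R`, `∀ i ∈ T` is decided by
        -- `Nat.decidableForallFin` rather than `Finset.decidableDforallFinset`
        simpa using sum_filter_card_mem_ge_le_choose_mul_pow Bad hp0
          (fun T => by convert hindep T) hbad (R - L)
    _ ≤ 4 ^ (R - L) * (3 * δ') ^ (R - L) := by
        gcongr
        exact_mod_cast Nat.choose_le_four_pow (by omega)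
    _ = (12 * δ') ^ (R - L) := by rw [← mul_pow]; ring_nf
    _ ≤ (6 * Real.exp 1 * δ') ^ (R - L) := by gcongr; nlinarith
    _ ≤ δ / 2 := Real.pow_le_of_log_inv_le (by positivity) (by positivity) <| by
        rwa [hk, one_div_div]

/-- Each of `R` mutually independent rounds is 'bad' with probability at most `3δ'`.
With `L = ⌈log_{3/2} n⌉` and `R ≥ L + max{L, log(2/δ)/log(1/(6eδ'))}` (the second
condition encoded without division as `L ≤ R − L` and
`log(2/δ) ≤ (R − L)·log(1/(6eδ'))`), and `δ' ≤ 1/(6e)`, the probability of having fewer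
than `L` good rounds is at most `δ/2`. -/
theorem few_good_rounds_prob_le {Ω : Type*} [Fintype Ω]
    (p : Ω → ℝ) (hp0 : ∀ ω, 0 ≤ p ω) (hp1 : ∑ ω, p ω = 1)
    (n : ℕ) (hn : 2 ≤ n) (δ δ' : ℝ) (hδ0 : 0 < δ) (hδ1 : δ < 1)
    (hδ'0 : 0 < δ') (hδ' : δ' ≤ 1 / (6 * Real.exp 1))
    (R : ℕ) (Bad : Fin R → Finset Ω)
    (hindep : ∀ T : Finset (Fin R),
      (∑ ω ∈ Finset.univ.filter (fun ω => ∀ i ∈ T, ω ∈ Bad i), p ω) =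
        ∏ i ∈ T, ∑ ω ∈ Bad i, p ω)
    (hbad : ∀ i, (∑ ω ∈ Bad i, p ω) ≤ 3 * δ')
    (hR1 : (⌈Real.logb (3 / 2) n⌉₊ : ℝ) ≤ (R : ℝ) - ⌈Real.logb (3 / 2) n⌉₊)
    (hR2 : Real.log (2 / δ) ≤
      ((R : ℝ) - ⌈Real.logb (3 / 2) n⌉₊) * Real.log (1 / (6 * Real.exp 1 * δ'))) :
    (∑ ω ∈ Finset.univ.filter
        (fun ω =>
          (Finset.univ.filter (fun i : Fin R => ω ∉ Bad i)).card <
            ⌈Real.logb (3 / 2) n⌉₊), p ω) ≤ δ / 2 :=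
  few_good_rounds_prob_le_general p hp0 n δ δ' hδ0 hδ'0 R Bad hindep hbad hR1 hR2
end

section
/- In an iterative component-merging process starting with k non-maximal connected components, if in a round at most k/3 components fail to find an outgoing edge and every component that finds an outgoing edge is merged with another component, then after the round at most 2k/3 non-maximal components remain; consequently, after ⌈log_{3/2} n⌉ such 'good' rounds starting from at most n components, no non-maximal components remain. -/
/-!
Every round removes at least a third of the non-maximal components, so after `t` rounds at
most `(2/3)^t n` remain. At `T = ⌈log_{3/2} n⌉` this bound is `n / (3/2)^T ≤ 1`, and it is
strictly below `1` because `(3/2)^T` is not an integer once `T ≥ 1`.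
-/

open Real

lemma le_pow_natCeil_logb {b x : ℝ} (hb : 1 < b) (hx : 0 < x) : x ≤ b ^ ⌈logb b x⌉₊ := by
  rw [← rpow_natCast, ← logb_le_iff_le_rpow hb hx]
  exact Nat.le_ceil _

lemma three_halves_pow_ne_natCast {T : ℕ} (hT : T ≠ 0) (n : ℕ) : (3 / 2 : ℝ) ^ T ≠ n := by
  intro h
  have hnat : 3 ^ T = n * 2 ^ T := by
    rw [div_pow, div_eq_iff (by positivity)] at h
    exact_mod_cast h
  have htwo : 2 ∣ 3 ^ T := hnat ▸ dvd_mul_of_dvd_right (dvd_pow_self 2 hT) n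
  exact absurd (Nat.prime_two.dvd_of_dvd_pow htwo) (by norm_num)

lemma natCast_lt_three_halves_pow_natCeil_logb {n : ℕ} (hn : 2 ≤ n) :
    (n : ℝ) < (3 / 2) ^ ⌈logb (3 / 2) n⌉₊ := by
  have hn' : (1 : ℝ) < n := by exact_mod_cast hn
  have hT : ⌈logb (3 / 2) (n : ℝ)⌉₊ ≠ 0 :=
    (Nat.ceil_pos.2 (logb_pos (by norm_num) hn')).ne'
  exact (le_pow_natCeil_logb (by norm_num) (by linarith)).lt_of_ne
    (three_halves_pow_ne_natCast hT n).symm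

/-- Iterative component merging: `k t` is the number of non-maximal connected components
after `t` rounds and `f t` the number of components failing to find an outgoing edge in
round `t`. If in every round at most `k t / 3` components fail and every component finding
an outgoing edge is merged with another (so the successful ones at least halve in number,
i.e. `k (t+1) ≤ (k t − f t)/2 + f t`), then every round leaves at most `2 k t / 3`
non-maximal components, and after `⌈log_{3/2} n⌉` rounds starting from `k 0 ≤ n`
components, none remain. -/
theorem component_merging (n : ℕ) (hn : 2 ≤ n) (k f : ℕ → ℕ) (h0 : k 0 ≤ n)
    (hround : ∀ t, (f t : ℝ) ≤ (k t : ℝ) / 3 ∧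
      (k (t + 1) : ℝ) ≤ ((k t : ℝ) - f t) / 2 + f t) :
    (∀ t, (k (t + 1) : ℝ) ≤ 2 * (k t : ℝ) / 3) ∧ k ⌈Real.logb (3 / 2) n⌉₊ = 0 := by
  have hstep : ∀ t, (k (t + 1) : ℝ) ≤ 2 * (k t : ℝ) / 3 := fun t => by
    obtain ⟨hfail, hmerge⟩ := hround t
    linarith
  refine ⟨hstep, ?_⟩
  set T := ⌈Real.logb (3 / 2) n⌉₊
  have hdecay : (k T : ℝ) ≤ (2 / 3) ^ T * n :=
    calc (k T : ℝ) ≤ (2 / 3) ^ T * k 0 :=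
          le_geom (u := fun t => (k t : ℝ)) (by norm_num) T fun t _ => by linarith [hstep t]
      _ ≤ (2 / 3) ^ T * n := by gcongr
  have hsmall : (2 / 3 : ℝ) ^ T * n < 1 :=
    calc (2 / 3 : ℝ) ^ T * n < (2 / 3) ^ T * (3 / 2) ^ T := by
          gcongr; exact natCast_lt_three_halves_pow_natCeil_logb hn
      _ = 1 := by rw [← mul_pow]; norm_num
  exact Nat.lt_one_iff.mp (by exact_mod_cast hdecay.trans_lt hsmall)
end

section
/- If a Monte Carlo fully dynamic spanning forest data structure on 2n-node graphs uses C bits of memory and answers a spanning-forest query correctly with probability 1 − δ, then there is a one-way communication protocol for n-fold UR⊂ over universe [n] using C bits of communication with success probability 1 − δ. -/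
/-!
Alice inserts the edges `(x, i)`, `x ∈ S i`, of a bipartite graph between element vertices and
index vertices into the data structure and sends its memory state; Bob, sharing the random seed,
resumes from that state, deletes the edges `(x, i)`, `x ∈ T i`, and queries. The final graph joins
the index vertex `i` exactly to `S i \ T i`, which is nonempty, so in any spanning forest `i` has a
neighbour, and that neighbour lies in `S i \ T i`. Bob therefore succeeds on every seed on which
the data structure answers correctly.
-/

open Finset
open scoped Classical

/-- `F` is a spanning forest of `G`: a subgraph of `G` that is acyclic and preserves
connectivity. -/
def IsSpanningForest {V : Type*} (G F : SimpleGraph V) : Prop :=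
  F ≤ G ∧ F.IsAcyclic ∧ ∀ u v, G.Reachable u v → F.Reachable u v

/-- The graph determined by a sequence of edge insertions (`true`) and deletions (`false`). -/
noncomputable def graphOfUpdates {V : Type*} [DecidableEq V]
    (l : List (Sym2 V × Bool)) : SimpleGraph V :=
  SimpleGraph.fromEdgeSet
    ↑(l.foldl (fun E e => if e.2 then insert e.1 E else E.erase e.1) (∅ : Finset (Sym2 V)))

namespace List

variable {α : Type*} [DecidableEq α]

lemma foldl_insert_eq_union (l : List α) (s : Finset α) :
    l.foldl (fun s a => insert a s) s = s ∪ l.toFinset := by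
  induction l generalizing s with
  | nil => simp
  | cons a l ih => simp [ih, Finset.insert_union, Finset.union_insert]

lemma foldl_erase_eq_sdiff (l : List α) (s : Finset α) :
    l.foldl Finset.erase s = s \ l.toFinset := by
  induction l generalizing s with
  | nil => simp
  | cons a l ih => simp [ih, Finset.sdiff_insert, Finset.erase_sdiff_comm]

end List

lemma IsSpanningForest.exists_adj {V : Type*} {G F : SimpleGraph V} (hF : IsSpanningForest G F)
    {u v : V} (huv : G.Adj u v) : ∃ w, F.Adj u w := by
  obtain ⟨p⟩ := hF.2.2 u v huv.reachable
  exact ⟨_, p.adj_snd (SimpleGraph.Walk.not_nil_of_ne huv.ne)⟩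

section Updates

variable {V : Type*} [DecidableEq V]

noncomputable def insertions (A : Finset (Sym2 V)) : List (Sym2 V × Bool) :=
  A.toList.map (·, true)

noncomputable def deletions (D : Finset (Sym2 V)) : List (Sym2 V × Bool) :=
  D.toList.map (·, false)

lemma graphOfUpdates_insertions_append_deletions (A D : Finset (Sym2 V)) :
    graphOfUpdates (insertions A ++ deletions D) = SimpleGraph.fromEdgeSet ↑(A \ D) := by
  simp only [graphOfUpdates, insertions, deletions, List.foldl_append, List.foldl_map, ite_true,
    Bool.false_eq_true, ite_false]
  rw [List.foldl_insert_eq_union, List.foldl_erase_eq_sdiff, Finset.empty_union,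
    Finset.toList_toFinset, Finset.toList_toFinset]

end Updates

section Incidence

variable {α β V : Type*} [Fintype β] [DecidableEq V] (f : α ⊕ β ↪ V)

def incidenceEdges (R : β → Finset α) : Finset (Sym2 V) :=
  univ.biUnion fun i => (R i).image fun x => s(f (.inl x), f (.inr i))

lemma fromEdgeSet_incidenceEdges_sdiff_adj_iff [DecidableEq α] {S T : β → Finset α} {i : β}
    {w : V} :
    (SimpleGraph.fromEdgeSet ↑(incidenceEdges f S \ incidenceEdges f T)).Adj (f (.inr i)) w ↔
      ∃ x ∈ S i \ T i, w = f (.inl x) := by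
  simp only [incidenceEdges, coe_sdiff, coe_biUnion, coe_univ, Set.mem_univ, coe_image,
    Set.iUnion_true, SimpleGraph.fromEdgeSet_sdiff, SimpleGraph.sdiff_adj,
    SimpleGraph.fromEdgeSet_adj, Set.mem_iUnion, Set.mem_image, SetLike.mem_coe, Sym2.eq,
    Sym2.rel_iff', Prod.mk.injEq, EmbeddingLike.apply_eq_iff_eq, reduceCtorEq, false_and,
    Prod.swap_prod_mk, Sum.inr.injEq, false_or, ↓existsAndEq, and_true, ne_eq, not_and,
    Decidable.not_not, forall_exists_index, and_imp, mem_sdiff]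
  constructor
  · rintro ⟨⟨⟨x, hx, rfl⟩, hne⟩, hT⟩
    exact ⟨x, ⟨hx, fun hxT => hne (hT x hxT rfl)⟩, rfl⟩
  · rintro ⟨x, ⟨hx, hxT⟩, rfl⟩
    exact ⟨⟨⟨x, hx, rfl⟩, f.injective.ne Sum.inr_ne_inl⟩,
      fun y hy hyx => absurd (Sum.inl_injective (f.injective hyx) ▸ hy) hxT⟩

noncomputable def forestNeighbor (F : SimpleGraph V) (i : β) (fallback : α) : α :=
  if h : ∃ x, F.Adj (f (.inr i)) (f (.inl x)) then h.choose else fallback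

lemma IsSpanningForest.forestNeighbor_mem_sdiff [DecidableEq α] {S T : β → Finset α}
    {F : SimpleGraph V}
    (hF : IsSpanningForest (SimpleGraph.fromEdgeSet ↑(incidenceEdges f S \ incidenceEdges f T)) F)
    {i : β} (hi : (S i \ T i).Nonempty) (fallback : α) :
    forestNeighbor f F i fallback ∈ S i \ T i := by
  obtain ⟨x, hx⟩ := hi
  obtain ⟨w, hw⟩ :=
    hF.exists_adj ((fromEdgeSet_incidenceEdges_sdiff_adj_iff f).2 ⟨x, hx, rfl⟩)
  obtain ⟨y, -, rfl⟩ := (fromEdgeSet_incidenceEdges_sdiff_adj_iff f).1 (hF.1 hw)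
  have h : ∃ y, F.Adj (f (.inr i)) (f (.inl y)) := ⟨y, hw⟩
  obtain ⟨z, hz, hzy⟩ := (fromEdgeSet_incidenceEdges_sdiff_adj_iff f).1 (hF.1 h.choose_spec)
  rw [forestNeighbor, dif_pos h, Sum.inl_injective (f.injective hzy)]
  exact hz

end Incidence

def finSumFinEmbedding (n : ℕ) : Fin n ⊕ Fin n ↪ Fin (2 * n) :=
  (finSumFinEquiv.trans (finCongr (two_mul n).symm)).toEmbedding

theorem dynamic_spanning_forest_to_nfold_UR_general (n C : ℕ) (δ : ℝ)
    (Seed : Type) [Fintype Seed] (q : Seed → ℝ) (hq0 : ∀ s, 0 ≤ q s)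
    (State : Type) [Fintype State] (hcard : Fintype.card State ≤ 2 ^ C)
    (init : Seed → State)
    (upd : Seed → State → Sym2 (Fin (2 * n)) × Bool → State)
    (query : Seed → State → SimpleGraph (Fin (2 * n)))
    (hcorrect : ∀ l : List (Sym2 (Fin (2 * n)) × Bool),
      1 - δ ≤ ∑ s ∈ Finset.univ.filter
          (fun s =>
            IsSpanningForest (graphOfUpdates l) (query s (l.foldl (upd s) (init s)))), q s) :
    ∃ (msg : (Fin n → Finset (Fin n)) → Seed → Fin (2 ^ C))
      (out : Fin (2 ^ C) → (Fin n → Finset (Fin n)) → Seed → Fin n → Fin n),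
      ∀ S T : Fin n → Finset (Fin n), (∀ i, T i ⊂ S i) →
        1 - δ ≤ ∑ s ∈ Finset.univ.filter
            (fun s => ∀ i, out (msg S s) T s i ∈ S i \ T i), q s := by
  obtain ⟨enc⟩ : Nonempty (State ↪ Fin (2 ^ C)) :=
    Function.Embedding.nonempty_of_card_le (by simpa using hcard)
  let f := finSumFinEmbedding n
  refine ⟨fun S s => enc ((insertions (incidenceEdges f S)).foldl (upd s) (init s)),
    fun m T s i => forestNeighbor f (query s ((deletions (incidenceEdges f T)).foldl (upd s)
      ((Function.partialInv enc m).getD (init s)))) i i, fun S T hST => ?_⟩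
  refine (hcorrect (insertions (incidenceEdges f S) ++ deletions (incidenceEdges f T))).trans
    (sum_le_sum_of_subset_of_nonneg (monotone_filter_right _ fun s _ hs i => ?_)
      fun s _ _ => hq0 s)
  rw [graphOfUpdates_insertions_append_deletions, List.foldl_append] at hs
  simp only [Function.partialInv_left enc.injective, Option.getD_some]
  exact hs.forestNeighbor_mem_sdiff f (sdiff_nonempty.2 (hST i).2) i

/-- If a Monte Carlo fully dynamic spanning forest data structure on `2n`-node graphs uses
`C` bits of memory (state space of size at most `2^C`) and, on every update sequence,
answers a spanning-forest query correctly with probability `1 − δ` over its random seed,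
then there is a one-way communication protocol for `n`-fold `UR⊂` over universe `[n]`
using `C` bits of communication (the message lies in `Fin (2^C)`) with success probability
`1 − δ`: for all inputs `S_i ⊋ T_i`, with probability `1 − δ` Bob outputs, for every `i`,
an element of `S_i ∖ T_i`. -/
theorem dynamic_spanning_forest_to_nfold_UR (n C : ℕ) (hn : 1 ≤ n) (δ : ℝ)
    (Seed : Type) [Fintype Seed] (q : Seed → ℝ) (hq0 : ∀ s, 0 ≤ q s) (hq1 : ∑ s, q s = 1)
    (State : Type) [Fintype State] (hcard : Fintype.card State ≤ 2 ^ C)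
    (init : Seed → State)
    (upd : Seed → State → Sym2 (Fin (2 * n)) × Bool → State)
    (query : Seed → State → SimpleGraph (Fin (2 * n)))
    (hcorrect : ∀ l : List (Sym2 (Fin (2 * n)) × Bool),
      1 - δ ≤ ∑ s ∈ Finset.univ.filter
          (fun s =>
            IsSpanningForest (graphOfUpdates l) (query s (l.foldl (upd s) (init s)))), q s) :
    ∃ (msg : (Fin n → Finset (Fin n)) → Seed → Fin (2 ^ C))
      (out : Fin (2 ^ C) → (Fin n → Finset (Fin n)) → Seed → Fin n → Fin n),
      ∀ S T : Fin n → Finset (Fin n), (∀ i, T i ⊂ S i) →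
        1 - δ ≤ ∑ s ∈ Finset.univ.filter
            (fun s => ∀ i, out (msg S s) T s i ∈ S i \ T i), q s :=
  dynamic_spanning_forest_to_nfold_UR_general n C δ Seed q hq0 State hcard init upd query hcorrect
end
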